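/- arXiv:1506.02820 — 8 statements merged into one kernel-verified Lean document; each statement's English description precedes it below -/
import Mathlib

section
/- Let C be a linear [n,k,d] repeated-root cyclic code over F_q (q a power of the prime p) of length n = p^s·n' with gcd(n',p) = 1, whose generator polynomial g satisfies deg g ≥ p^s − 1. Let γ be an element of order n' in an extension field of F_q. Suppose there are integers f, m ≠ 0 with gcd(n',m) = 1 and δ ≥ 2 such that for every codeword c(X) ∈ C the formal power series Σ_{i=0}^∞ c^{[p^s−1]}(γ^{f+im}) X^i is congruent to 0 modulo X^{δ−1} (i.e., its first δ−1 coefficients vanish). Then the minimum Hamming distance of C satisfies d ≥ δ. -/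
open Polynomial


lemma lucas_aux (p : ℕ) (hp : p.Prime) (s : ℕ) : ∀ j : ℕ,
    ((Nat.choose j (p ^ s - 1) : ZMod p)) = if j % p ^ s = p ^ s - 1 then 1 else 0 := by
  haveI : Fact p.Prime := ⟨hp⟩
  induction s with
  | zero => intro j; simp [Nat.mod_one]
  | succ s ih =>
    intro j
    have hp2 := hp.two_le
    have ha : 1 ≤ p ^ s := Nat.one_le_pow _ _ hp.pos
    have hmul : p * (p ^ s - 1) = p * p ^ s - p := by rw [Nat.mul_sub, mul_one]
    have hlep : p ≤ p * p ^ s := Nat.le_mul_of_pos_right p (by positivity)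
    have hdecomp : p ^ (s + 1) - 1 = (p - 1) + p * (p ^ s - 1) := by
      rw [pow_succ', hmul]; omega
    have hmodp : (p ^ (s + 1) - 1) % p = p - 1 := by
      rw [hdecomp, Nat.add_mul_mod_self_left, Nat.mod_eq_of_lt (by omega)]
    have hdivp : (p ^ (s + 1) - 1) / p = p ^ s - 1 := by
      rw [hdecomp, Nat.add_mul_div_left _ _ hp.pos, Nat.div_eq_of_lt (by omega), zero_add]
    have key : ((j.choose (p ^ (s+1) - 1) : ZMod p))
        = (((j % p).choose (p - 1) : ZMod p)) * (((j / p).choose (p ^ s - 1) : ZMod p)) := by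
      have h := (Choose.choose_modEq_choose_mod_mul_choose_div_nat
        (n := j) (k := p ^ (s+1) - 1) (p := p))
      have h2 := (ZMod.natCast_eq_natCast_iff _ _ _).mpr h
      rw [hmodp, hdivp] at h2
      push_cast at h2 ⊢
      exact h2
    have hjp : j % p < p := Nat.mod_lt _ hp.pos
    have hxmod : j % p ^ (s + 1) % p = j % p := Nat.mod_mod_of_dvd _ ⟨p ^ s, by rw [pow_succ']⟩
    have hxdiv : j % p ^ (s + 1) / p = j / p % p ^ s := by
      rw [pow_succ']; exact Nat.mod_mul_right_div_self _ _ _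
    have hxlt : j % p ^ (s+1) < p ^ (s+1) := Nat.mod_lt _ (by positivity)
    have hrecon : j % p ^ (s + 1) = j % p + p * (j / p % p ^ s) := by
      conv_lhs => rw [← Nat.mod_add_div (j % p ^ (s+1)) p, hxmod, hxdiv]
    have hiff : j % p ^ (s + 1) = p ^ (s + 1) - 1 ↔ (j % p = p - 1 ∧ j / p % p ^ s = p ^ s - 1) := by
      constructor
      · intro h
        constructor
        · rw [← hxmod, h, hmodp]
        · rw [← hxdiv, h, hdivp]
      · rintro ⟨h1, h2⟩
        rw [hrecon, h1, h2, hdecomp]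
    rw [key, ih]
    have hchoose1 : ((j % p).choose (p - 1) : ZMod p) = if j % p = p - 1 then 1 else 0 := by
      by_cases h : j % p = p - 1
      · rw [h]; simp
      · rw [Nat.choose_eq_zero_of_lt (by omega)]; simp [h]
    rw [hchoose1]
    by_cases h1 : j % p = p - 1 <;> by_cases h2 : j / p % p ^ s = p ^ s - 1 <;>
      simp [h1, h2, hiff]



lemma vdm_classes {K : Type*} [Field K] [DecidableEq K] (n' δ : ℕ) (x : ℕ → K) (B : ℕ → K)
    (hxinj : ∀ v ∈ Finset.range n', ∀ w ∈ Finset.range n', x v = x w → v = w)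
    (hsupp : ((Finset.range n').filter (fun v => B v ≠ 0)).card ≤ δ - 1)
    (heq : ∀ i < δ - 1, ∑ v ∈ Finset.range n', B v * x v ^ i = 0) :
    ∀ v ∈ Finset.range n', B v = 0 := by
  classical
  set U : Finset ℕ := (Finset.range n').filter (fun v => B v ≠ 0) with hU
  have hUsub : U ⊆ Finset.range n' := Finset.filter_subset _ _
  set σ : Fin U.card ≃o {a // a ∈ U} := U.orderIsoOfFin rfl with hσ
  have hxinj' : Function.Injective (fun i : Fin U.card => x ((σ i : ℕ))) := by
    intro i j hij
    have hi : ((σ i : ℕ)) ∈ Finset.range n' := hUsub (σ i).2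
    have hj : ((σ j : ℕ)) ∈ Finset.range n' := hUsub (σ j).2
    have := hxinj _ hi _ hj hij
    exact σ.injective (Subtype.ext this)
  have hBU : ∀ v ∈ Finset.range n', v ∉ U → B v = 0 := by
    intro v hv hvU
    by_contra h
    exact hvU (Finset.mem_filter.mpr ⟨hv, h⟩)
  have hfv : ∀ i : Fin U.card,
      ∑ j : Fin U.card, B ((σ j : ℕ)) * x ((σ j : ℕ)) ^ (i : ℕ) = 0 := by
    intro i
    have h1 : ∑ j : Fin U.card, B ((σ j : ℕ)) * x ((σ j : ℕ)) ^ (i : ℕ)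
        = ∑ u : {a // a ∈ U}, B (u : ℕ) * x (u : ℕ) ^ (i : ℕ) :=
      Fintype.sum_equiv σ.toEquiv _ _ (fun j => rfl)
    have h2 : ∑ u : {a // a ∈ U}, B (u : ℕ) * x (u : ℕ) ^ (i : ℕ)
        = ∑ v ∈ U, B v * x v ^ (i : ℕ) := Finset.sum_coe_sort U (fun v => B v * x v ^ (i : ℕ))
    have h3 : ∑ v ∈ U, B v * x v ^ (i : ℕ)
        = ∑ v ∈ Finset.range n', B v * x v ^ (i : ℕ) := by
      refine Finset.sum_subset hUsub ?_
      intro v hv hvU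
      rw [hBU v hv hvU, zero_mul]
    rw [h1, h2, h3]
    exact heq (i : ℕ) (lt_of_lt_of_le i.2 hsupp)
  have hB0 := Matrix.eq_zero_of_forall_pow_sum_mul_pow_eq_zero hxinj' hfv
  intro v hv
  by_cases hvU : v ∈ U
  · have := congrFun hB0 (σ.symm ⟨v, hvU⟩)
    simpa using this
  · exact hBU v hv hvU


lemma classes_vanish
    {F K : Type*} [Field F] [Field K] [Algebra F K]
    (p s n' : ℕ) (hps : 0 < p ^ s) (hn'0 : 0 < n')
    (g : F[X]) (hg_dvd : g ∣ X ^ (p ^ s * n') - 1)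
    (γ : Kˣ) (hγ : orderOf γ = n')
    (f m : ℤ) (hmn' : Int.gcd (n' : ℤ) m = 1)
    (δ : ℕ)
    (hzero : ∀ c : F[X], c.degree < ((p ^ s * n' : ℕ) : WithBot ℕ) → g ∣ c →
      ∀ i < δ - 1,
        aeval ((γ ^ (f + (i : ℤ) * m) : Kˣ) : K) (hasseDeriv (p ^ s - 1) c) = 0)
    (c : F[X]) (hdeg : c.natDegree < p ^ s * n') (hdvd : g ∣ c)
    (hwt : c.support.card ≤ δ - 1) (k : ℕ) :
    ∀ v ∈ Finset.range n',
      (∑ a ∈ (Finset.range (p ^ s * n')).filter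
          (fun a => ((a + k) % (p ^ s * n')) % n' = v),
        ((((a + k) % (p ^ s * n')).choose (p ^ s - 1) : F) * c.coeff a)) = 0 := by
  classical
  have hn0 : 0 < p ^ s * n' := Nat.mul_pos hps hn'0
  -- the shifted codeword
  set ck : F[X] := ∑ a ∈ Finset.range (p ^ s * n'),
      C (c.coeff a) * X ^ ((a + k) % (p ^ s * n')) with hck
  have hcsum : c = ∑ a ∈ Finset.range (p ^ s * n'), C (c.coeff a) * X ^ a := by
    simp only [C_mul_X_pow_eq_monomial]
    exact c.as_sum_range' _ hdeg
  have hdiff : ∀ a : ℕ,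
      g ∣ ((X : F[X]) ^ ((a + k) % (p ^ s * n')) - X ^ (a + k)) := by
    intro a
    have hrep : (X : F[X]) ^ (a + k)
        = X ^ ((a + k) % (p ^ s * n')) * ((X ^ (p ^ s * n')) ^ ((a + k) / (p ^ s * n'))) := by
      rw [← pow_mul, ← pow_add, Nat.mod_add_div (a + k) (p ^ s * n')]
    have hd2 : (X : F[X]) ^ (p ^ s * n') - 1
        ∣ (X ^ (p ^ s * n')) ^ ((a + k) / (p ^ s * n')) - 1 := by
      simpa using sub_dvd_pow_sub_pow ((X : F[X]) ^ (p ^ s * n')) 1 ((a + k) / (p ^ s * n'))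
    have heq2 : (X : F[X]) ^ ((a + k) % (p ^ s * n')) - X ^ (a + k)
        = -(X ^ ((a + k) % (p ^ s * n'))
            * ((X ^ (p ^ s * n')) ^ ((a + k) / (p ^ s * n')) - 1)) := by
      rw [mul_sub, mul_one, ← hrep]; ring
    rw [heq2, dvd_neg]
    exact Dvd.dvd.mul_left (hg_dvd.trans hd2) _
  have h1 : X ^ k * c = ∑ a ∈ Finset.range (p ^ s * n'), C (c.coeff a) * X ^ (a + k) := by
    conv_lhs => rw [hcsum]
    rw [Finset.mul_sum]
    exact Finset.sum_congr rfl fun a _ => by ring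
  have hsplit : ck - X ^ k * c = ∑ a ∈ Finset.range (p ^ s * n'),
      C (c.coeff a) * (X ^ ((a + k) % (p ^ s * n')) - X ^ (a + k)) := by
    rw [h1, hck, ← Finset.sum_sub_distrib]
    exact Finset.sum_congr rfl fun a _ => by ring
  have hckdvd : g ∣ ck := by
    have h2 : g ∣ ck - X ^ k * c :=
      hsplit ▸ Finset.dvd_sum fun a _ => (hdiff a).mul_left _
    have h3 : g ∣ X ^ k * c := hdvd.mul_left _
    have h4 := dvd_add h2 h3
    rwa [show ck - X ^ k * c + X ^ k * c = ck by ring] at h4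
  have hckdeg : ck.degree < ((p ^ s * n' : ℕ) : WithBot ℕ) := by
    rw [hck]
    refine lt_of_le_of_lt (degree_sum_le _ _) ?_
    rw [Finset.sup_lt_iff (WithBot.bot_lt_coe _)]
    intro a ha
    refine lt_of_le_of_lt (degree_C_mul_X_pow_le _ _) ?_
    exact_mod_cast Nat.mod_lt _ hn0
  have hHD : hasseDeriv (p ^ s - 1) ck = ∑ a ∈ Finset.range (p ^ s * n'),
      monomial ((a + k) % (p ^ s * n') - (p ^ s - 1))
        ((((a + k) % (p ^ s * n')).choose (p ^ s - 1) : F) * c.coeff a) := by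
    rw [hck, map_sum]
    exact Finset.sum_congr rfl fun a _ => by
      rw [C_mul_X_pow_eq_monomial, hasseDeriv_monomial]
  -- congruence modulo n' in exponents
  have hmodeq : ∀ (j : ℕ), (j : ℤ) ≡ ((j % n' : ℕ) : ℤ) [ZMOD (n' : ℤ)] := by
    intro j
    have hc : ((j % n' : ℕ) : ℤ) = (j : ℤ) % (n' : ℤ) := by push_cast; ring
    show (j : ℤ) % (n' : ℤ) = ((j % n' : ℕ) : ℤ) % (n' : ℤ)
    rw [hc, Int.emod_emod_of_dvd _ dvd_rfl]
  -- the spectral equations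
  have heq : ∀ i < δ - 1, ∑ v ∈ Finset.range n',
      ((algebraMap F K (∑ a ∈ (Finset.range (p ^ s * n')).filter
            (fun a => ((a + k) % (p ^ s * n')) % n' = v),
          ((((a + k) % (p ^ s * n')).choose (p ^ s - 1) : F) * c.coeff a)))
        * ((γ ^ (f * ((v : ℤ) - (p ^ s - 1 : ℕ))) : Kˣ) : K))
      * (((γ ^ (m * ((v : ℤ) - (p ^ s - 1 : ℕ))) : Kˣ) : K)) ^ i = 0 := by
    intro i hi
    have h0 := hzero ck hckdeg hckdvd i hi
    rw [hHD, map_sum] at h0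
    have hterm : ∀ a ∈ Finset.range (p ^ s * n'),
        aeval ((γ ^ (f + (i : ℤ) * m) : Kˣ) : K)
          (monomial ((a + k) % (p ^ s * n') - (p ^ s - 1))
            ((((a + k) % (p ^ s * n')).choose (p ^ s - 1) : F) * c.coeff a))
        = ((algebraMap F K ((((a + k) % (p ^ s * n')).choose (p ^ s - 1) : F) * c.coeff a))
            * ((γ ^ (f * (((((a + k) % (p ^ s * n')) % n' : ℕ) : ℤ) - (p ^ s - 1 : ℕ))) : Kˣ) : K))
          * (((γ ^ (m * (((((a + k) % (p ^ s * n')) % n' : ℕ) : ℤ) - (p ^ s - 1 : ℕ))) : Kˣ) : K)) ^ i := by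
      intro a _
      rw [aeval_monomial]
      by_cases hje : (p ^ s - 1) ≤ (a + k) % (p ^ s * n')
      · have hu : (γ ^ (f + (i : ℤ) * m)) ^ ((a + k) % (p ^ s * n') - (p ^ s - 1))
            = γ ^ (f * (((((a + k) % (p ^ s * n')) % n' : ℕ) : ℤ) - (p ^ s - 1 : ℕ)))
              * (γ ^ (m * (((((a + k) % (p ^ s * n')) % n' : ℕ) : ℤ) - (p ^ s - 1 : ℕ)))) ^ i := by
          rw [← zpow_natCast (γ ^ (f + (i : ℤ) * m)) ((a + k) % (p ^ s * n') - (p ^ s - 1)),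
            ← zpow_mul]
          rw [← zpow_natCast (γ ^ (m * (((((a + k) % (p ^ s * n')) % n' : ℕ) : ℤ) - (p ^ s - 1 : ℕ)))) i,
            ← zpow_mul, ← zpow_add]
          rw [zpow_eq_zpow_iff_modEq, hγ]
          have hcast : ((((a + k) % (p ^ s * n') - (p ^ s - 1) : ℕ)) : ℤ)
              = (((a + k) % (p ^ s * n') : ℕ) : ℤ) - ((p ^ s - 1 : ℕ) : ℤ) := by
            push_cast [hje]; ring
          rw [hcast]
          have hjv := (hmodeq ((a + k) % (p ^ s * n'))).sub_right ((p ^ s - 1 : ℕ) : ℤ)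
          have h5 := hjv.mul_left (f + (i : ℤ) * m)
          have h6 : (f + (i : ℤ) * m) * (((((a + k) % (p ^ s * n')) % n' : ℕ) : ℤ) - (p ^ s - 1 : ℕ))
              = f * (((((a + k) % (p ^ s * n')) % n' : ℕ) : ℤ) - (p ^ s - 1 : ℕ))
                + m * (((((a + k) % (p ^ s * n')) % n' : ℕ) : ℤ) - (p ^ s - 1 : ℕ)) * i := by
            ring
          rw [← h6]
          exact h5
        have hK := congrArg (Units.val) hu
        simp only [Units.val_mul, Units.val_pow_eq_pow_val] at hK
        rw [hK]; ring
      · rw [Nat.choose_eq_zero_of_lt (lt_of_not_ge hje)]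
        push_cast
        simp
    rw [Finset.sum_congr rfl hterm] at h0
    rw [← Finset.sum_fiberwise_of_maps_to
      (g := fun a => ((a + k) % (p ^ s * n')) % n')
      (t := Finset.range n')
      (fun a _ => Finset.mem_range.mpr (Nat.mod_lt _ hn'0)) _] at h0
    rw [← h0]
    refine Finset.sum_congr rfl fun v hv => ?_
    rw [map_sum, Finset.sum_mul, Finset.sum_mul]
    refine Finset.sum_congr rfl fun a ha => ?_
    rw [(Finset.mem_filter.mp ha).2]
  -- injectivity of v ↦ γ^(m(v-e))
  have hxinj : ∀ v ∈ Finset.range n', ∀ w ∈ Finset.range n',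
      ((γ ^ (m * ((v : ℤ) - (p ^ s - 1 : ℕ))) : Kˣ) : K)
        = ((γ ^ (m * ((w : ℤ) - (p ^ s - 1 : ℕ))) : Kˣ) : K) → v = w := by
    intro v hv w hw hvw
    have h1 : γ ^ (m * ((v : ℤ) - (p ^ s - 1 : ℕ))) = γ ^ (m * ((w : ℤ) - (p ^ s - 1 : ℕ))) :=
      Units.ext hvw
    rw [zpow_eq_zpow_iff_modEq, hγ] at h1
    have h3 := h1.dvd
    rw [show m * ((w : ℤ) - (p ^ s - 1 : ℕ)) - m * ((v : ℤ) - (p ^ s - 1 : ℕ))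
        = m * ((w : ℤ) - (v : ℤ)) by ring] at h3
    have hco : IsCoprime ((n' : ℕ) : ℤ) m := Int.isCoprime_iff_gcd_eq_one.mpr hmn'
    have h4 : ((n' : ℕ) : ℤ) ∣ (w : ℤ) - (v : ℤ) := hco.dvd_of_dvd_mul_left h3
    have h5 : n' ∣ ((w : ℤ) - (v : ℤ)).natAbs := by
      have := Int.natAbs_dvd_natAbs.mpr h4
      simpa using this
    have hv' := Finset.mem_range.mp hv
    have hw' := Finset.mem_range.mp hw
    rcases Nat.eq_zero_or_pos (((w : ℤ) - (v : ℤ)).natAbs) with h6 | h6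
    · omega
    · have := Nat.le_of_dvd h6 h5
      omega
  -- cardinality bound
  have hsubset : (Finset.range n').filter (fun v =>
        ((algebraMap F K (∑ a ∈ (Finset.range (p ^ s * n')).filter
              (fun a => ((a + k) % (p ^ s * n')) % n' = v),
            ((((a + k) % (p ^ s * n')).choose (p ^ s - 1) : F) * c.coeff a)))
          * ((γ ^ (f * ((v : ℤ) - (p ^ s - 1 : ℕ))) : Kˣ) : K)) ≠ 0)
      ⊆ c.support.image (fun a => ((a + k) % (p ^ s * n')) % n') := by
    intro v hv
    rcases Finset.mem_filter.mp hv with ⟨hv1, hv2⟩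
    have hA : (∑ a ∈ (Finset.range (p ^ s * n')).filter
          (fun a => ((a + k) % (p ^ s * n')) % n' = v),
        ((((a + k) % (p ^ s * n')).choose (p ^ s - 1) : F) * c.coeff a)) ≠ 0 := by
      intro h; exact hv2 (by rw [h, map_zero, zero_mul])
    have hex : ∃ a ∈ (Finset.range (p ^ s * n')).filter
          (fun a => ((a + k) % (p ^ s * n')) % n' = v),
        ((((a + k) % (p ^ s * n')).choose (p ^ s - 1) : F) * c.coeff a) ≠ 0 := by
      by_contra h
      push_neg at h
      exact hA (Finset.sum_eq_zero h)
    obtain ⟨a, ha, hane⟩ := hex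
    rcases Finset.mem_filter.mp ha with ⟨ha1, ha2⟩
    refine Finset.mem_image.mpr ⟨a, ?_, ha2⟩
    exact mem_support_iff.mpr (fun h => hane (by rw [h, mul_zero]))
  have hcard : ((Finset.range n').filter (fun v =>
        ((algebraMap F K (∑ a ∈ (Finset.range (p ^ s * n')).filter
              (fun a => ((a + k) % (p ^ s * n')) % n' = v),
            ((((a + k) % (p ^ s * n')).choose (p ^ s - 1) : F) * c.coeff a)))
          * ((γ ^ (f * ((v : ℤ) - (p ^ s - 1 : ℕ))) : Kˣ) : K)) ≠ 0)).card ≤ δ - 1 :=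
    le_trans (Finset.card_le_card hsubset) (le_trans Finset.card_image_le hwt)
  -- apply the Vandermonde lemma
  intro v hv
  have hB := vdm_classes n' δ
    (fun v => ((γ ^ (m * ((v : ℤ) - (p ^ s - 1 : ℕ))) : Kˣ) : K))
    (fun v => (algebraMap F K (∑ a ∈ (Finset.range (p ^ s * n')).filter
          (fun a => ((a + k) % (p ^ s * n')) % n' = v),
        ((((a + k) % (p ^ s * n')).choose (p ^ s - 1) : F) * c.coeff a)))
      * ((γ ^ (f * ((v : ℤ) - (p ^ s - 1 : ℕ))) : Kˣ) : K))
    hxinj hcard heq v hv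
  rcases mul_eq_zero.mp hB with h | h
  · apply (algebraMap F K).injective
    rw [h, map_zero]
  · exact absurd h (Units.ne_zero _)

/-- **Bound I (BCH-like bound for repeated-root cyclic codes).**
Let `C` be the repeated-root cyclic code of length `n = p^s * n'` over `F` (a finite
field of order `q = p^t`, `gcd(n', p) = 1`) with monic generator polynomial `g`
dividing `X^n - 1` and `deg g ≥ p^s - 1`; its codewords are the polynomials `c` with
`deg c < n` and `g ∣ c`.  Let `γ` be an element of order `n'` in an extension field `K`
of `F`.  If there are integers `f`, `m ≠ 0` with `gcd(n', m) = 1` and `δ ≥ 2` such that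
for every codeword `c` the first `δ - 1` coefficients of the power series
`Σ_i c^{[p^s-1]}(γ^{f+im}) X^i` vanish, then every nonzero codeword has Hamming weight
at least `δ`, i.e. the minimum Hamming distance of `C` is at least `δ`. -/
theorem repeatedRoot_BCH_bound
    {F K : Type*} [Field F] [Fintype F] [Field K] [Algebra F K]
    (p t s n' : ℕ) (hp : p.Prime) (hq : Fintype.card F = p ^ t) (ht : 0 < t)
    (hn'p : Nat.Coprime n' p)
    (g : F[X]) (hg_monic : g.Monic) (hg_dvd : g ∣ X ^ (p ^ s * n') - 1)
    (hg_deg : p ^ s - 1 ≤ g.natDegree)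
    (γ : Kˣ) (hγ : orderOf γ = n')
    (f m : ℤ) (hm : m ≠ 0) (hmn' : Int.gcd (n' : ℤ) m = 1)
    (δ : ℕ) (hδ : 2 ≤ δ)
    (hzero : ∀ c : F[X], c.degree < ((p ^ s * n' : ℕ) : WithBot ℕ) → g ∣ c →
      ∀ i < δ - 1,
        aeval ((γ ^ (f + (i : ℤ) * m) : Kˣ) : K) (hasseDeriv (p ^ s - 1) c) = 0) :
    ∀ c : F[X], c.degree < ((p ^ s * n' : ℕ) : WithBot ℕ) → g ∣ c → c ≠ 0 →
      δ ≤ c.support.card := by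
  intro c hdeg hdvd hc0
  by_contra hlt
  push_neg at hlt
  apply hc0
  -- basic positivity facts
  have hn'0 : 0 < n' := by
    rcases Nat.eq_zero_or_pos n' with h | h
    · exfalso
      rw [h] at hn'p
      rw [Nat.coprime_zero_left] at hn'p
      exact hp.one_lt.ne' hn'p
    · exact h
  have hps : 0 < p ^ s := pow_pos hp.pos s
  have hn0 : 0 < p ^ s * n' := Nat.mul_pos hps hn'0
  have hnatdeg : c.natDegree < p ^ s * n' := (natDegree_lt_iff_degree_lt hc0).mpr hdeg
  have he_lt : p ^ s - 1 < p ^ s := by omega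
  -- characteristic of F is p
  haveI hcharF : CharP F p := by
    obtain ⟨p', hc⟩ := CharP.exists F
    obtain ⟨n0, hp', hcard⟩ := @FiniteField.card F _ _ p' hc
    have hd1 : p ∣ p' ^ (n0 : ℕ) := by
      rw [← hcard, hq]
      exact dvd_pow_self p ht.ne'
    have hd2 : p ∣ p' := hp.dvd_of_dvd_pow hd1
    have : p = p' := (Nat.prime_dvd_prime_iff_eq hp hp').mp hd2
    rwa [this]
  -- Lucas-type formula for the binomial coefficients over F
  have hchooseF : ∀ j : ℕ, ((j.choose (p ^ s - 1) : F)) = if j % p ^ s = p ^ s - 1 then 1 else 0 := by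
    intro j
    have h1 := lucas_aux p hp s j
    have h2 := congrArg (ZMod.castHom (dvd_refl p) F) h1
    rw [map_natCast, apply_ite (ZMod.castHom (dvd_refl p) F), map_one, map_zero] at h2
    exact h2
  -- CRT uniqueness
  have hCRT : ∀ x y : ℕ, x < p ^ s * n' → y < p ^ s * n' →
      x % p ^ s = y % p ^ s → x % n' = y % n' → x = y := by
    intro x y hx hy h1 h2
    have hco : Nat.Coprime (p ^ s) n' := Nat.Coprime.pow_left s hn'p.symm
    have hmm : x ≡ y [MOD p ^ s * n'] :=
      (Nat.modEq_and_modEq_iff_modEq_mul hco).mp ⟨h1, h2⟩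
    have h3 : x % (p ^ s * n') = y % (p ^ s * n') := hmm
    rwa [Nat.mod_eq_of_lt hx, Nat.mod_eq_of_lt hy] at h3
  -- show every coefficient vanishes
  refine Polynomial.ext fun z => ?_
  rw [coeff_zero]
  by_cases hz : z < p ^ s * n'
  swap
  · exact coeff_eq_zero_of_natDegree_lt (lt_of_lt_of_le hnatdeg (le_of_not_gt hz))
  · -- choose the shift k
    set k := (p ^ s - 1) + (p ^ s - z % p ^ s) with hk
    have hzk : z + k = (p ^ s - 1) + p ^ s * (z / p ^ s + 1) := by
      have h1 := Nat.div_add_mod z (p ^ s)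
      have h2 : z % p ^ s < p ^ s := Nat.mod_lt _ hps
      rw [Nat.mul_add, Nat.mul_one, hk]
      omega
    have hj0mod : (z + k) % p ^ s = p ^ s - 1 := by
      rw [hzk, Nat.add_mul_mod_self_left, Nat.mod_eq_of_lt he_lt]
    have hj0n : (z + k) % (p ^ s * n') % p ^ s = p ^ s - 1 := by
      rw [Nat.mod_mod_of_dvd _ (Dvd.intro n' rfl)]
      exact hj0mod
    have hmain := classes_vanish p s n' hps hn'0 g hg_dvd γ hγ f m hmn' δ hzero c hnatdeg hdvd
      (by omega : c.support.card ≤ δ - 1) k ((z + k) % (p ^ s * n') % n')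
      (Finset.mem_range.mpr (Nat.mod_lt _ hn'0))
    have hzmem : z ∈ (Finset.range (p ^ s * n')).filter
        (fun a => ((a + k) % (p ^ s * n')) % n' = (z + k) % (p ^ s * n') % n') :=
      Finset.mem_filter.mpr ⟨Finset.mem_range.mpr hz, rfl⟩
    have hother : ∀ a ∈ (Finset.range (p ^ s * n')).filter
        (fun a => ((a + k) % (p ^ s * n')) % n' = (z + k) % (p ^ s * n') % n'),
        a ≠ z → ((((a + k) % (p ^ s * n')).choose (p ^ s - 1) : F) * c.coeff a) = 0 := by
      intro a ha hane
      rcases Finset.mem_filter.mp ha with ⟨ha1, ha2⟩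
      by_cases hmode : ((a + k) % (p ^ s * n')) % p ^ s = p ^ s - 1
      · exfalso
        have hxy : (a + k) % (p ^ s * n') = (z + k) % (p ^ s * n') :=
          hCRT _ _ (Nat.mod_lt _ hn0) (Nat.mod_lt _ hn0) (by rw [hmode, hj0n]) ha2
        have hmeq : a + k ≡ z + k [MOD p ^ s * n'] := hxy
        have hmeq2 : a ≡ z [MOD p ^ s * n'] := Nat.ModEq.add_right_cancel' k hmeq
        have h6 : a % (p ^ s * n') = z % (p ^ s * n') := hmeq2
        rw [Nat.mod_eq_of_lt (Finset.mem_range.mp ha1), Nat.mod_eq_of_lt hz] at h6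
        exact hane h6
      · rw [hchooseF, if_neg hmode, zero_mul]
    rw [Finset.sum_eq_single_of_mem z hzmem hother] at hmain
    rw [hchooseF, if_pos hj0n, one_mul] at hmain
    exact hmain
end

section
/- Let C be a linear [n,k,d] repeated-root cyclic code over F_q (q a power of the prime p) of length n = p^s·n' with gcd(n',p) = 1 and generator polynomial g, and let γ be an element of order n' in an extension field of F_q. Suppose there are integers f, m ≠ 0 with gcd(n',m) = 1 and δ ≥ 2 such that γ^{f+im} is a root of g of multiplicity at least p^s (i.e., g^{[j]}(γ^{f+im}) = 0 for all 0 ≤ j < p^s) for every i = 0, 1, …, δ−2. Then the minimum Hamming distance of C satisfies d ≥ δ. -/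
open Polynomial Finset

lemma aux_vandermonde {K : Type*} [Field K] (S : Finset ℕ) (d x : ℕ → K)
    (hx : Set.InjOn x S)
    (h : ∀ i < S.card, ∑ k ∈ S, d k * x k ^ i = 0) :
    ∀ k ∈ S, d k = 0 := by
  intro k0 hk0
  have hcard : 1 ≤ S.card := Finset.card_pos.mpr ⟨k0, hk0⟩
  set R := Lagrange.basis S x k0 with hR
  have hdeg : R.natDegree < S.card := by
    rw [hR, Lagrange.natDegree_basis hx hk0]; omega
  have h1 : ∑ k ∈ S, d k * R.eval (x k) = d k0 := by
    rw [Finset.sum_eq_single k0]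
    · rw [Lagrange.eval_basis_self hx hk0, mul_one]
    · intro b hb hbne
      rw [Lagrange.eval_basis_of_ne hbne.symm hb, mul_zero]
    · intro hk; exact absurd hk0 hk
  have heval : ∀ k, R.eval (x k) = ∑ j ∈ range S.card, R.coeff j * x k ^ j := by
    intro k; exact Polynomial.eval_eq_sum_range' hdeg (x k)
  have h2 : ∑ k ∈ S, d k * R.eval (x k) = 0 := by
    calc ∑ k ∈ S, d k * R.eval (x k)
        = ∑ k ∈ S, ∑ j ∈ range S.card, R.coeff j * (d k * x k ^ j) := by
          refine Finset.sum_congr rfl fun k _ => ?_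
          rw [heval k, Finset.mul_sum]
          exact Finset.sum_congr rfl fun j _ => by ring
      _ = ∑ j ∈ range S.card, R.coeff j * ∑ k ∈ S, d k * x k ^ j := by
          rw [Finset.sum_comm]
          exact Finset.sum_congr rfl fun j _ => by rw [Finset.mul_sum]
      _ = 0 := by
          refine Finset.sum_eq_zero fun j hj => ?_
          rw [h j (Finset.mem_range.mp hj), mul_zero]
  rw [← h1, h2]

lemma aux_pow_dvd_of_hasseDeriv {K : Type*} [CommRing K] (f : K[X]) (α : K) (N : ℕ)
    (h : ∀ j < N, (Polynomial.hasseDeriv j f).eval α = 0) :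
    (X - C α) ^ N ∣ f := by
  conv_rhs => rw [← Polynomial.sum_taylor_eq f α]
  rw [Polynomial.sum]
  apply Finset.dvd_sum
  intro i hi
  have hiN : N ≤ i := by
    by_contra hlt
    have h0 := h i (not_le.mp hlt)
    rw [← Polynomial.taylor_coeff] at h0
    exact Polynomial.mem_support_iff.mp hi h0
  exact Dvd.dvd.mul_left (pow_dvd_pow _ hiN) _

lemma aux_hasseDeriv_map {R S : Type*} [Semiring R] [Semiring S] (φ : R →+* S) (j : ℕ)
    (f : R[X]) : Polynomial.hasseDeriv j (f.map φ) = (Polynomial.hasseDeriv j f).map φ := by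
  ext n
  rw [Polynomial.hasseDeriv_coeff, Polynomial.coeff_map, Polynomial.coeff_map,
    Polynomial.hasseDeriv_coeff, map_mul, map_natCast]

/-- **Bound I, generator-polynomial form.**  If the generator polynomial `g` of a
repeated-root cyclic code `C` of length `n = p^s * n'` over `F` has `γ^{f+im}` as a root
of multiplicity at least `p^s` (all Hasse derivatives of order `< p^s` vanish) for
`i = 0, …, δ-2`, where `γ` has order `n'`, `m ≠ 0`, `gcd(n', m) = 1` and `δ ≥ 2`, then
the minimum Hamming distance of `C` is at least `δ`. -/
theorem repeatedRoot_BCH_bound_of_generator_roots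
    {F K : Type*} [Field F] [Fintype F] [Field K] [Algebra F K]
    (p t s n' : ℕ) (hp : p.Prime) (hq : Fintype.card F = p ^ t) (ht : 0 < t)
    (hn'p : Nat.Coprime n' p)
    (g : F[X]) (hg_monic : g.Monic) (hg_dvd : g ∣ X ^ (p ^ s * n') - 1)
    (γ : Kˣ) (hγ : orderOf γ = n')
    (f m : ℤ) (hm : m ≠ 0) (hmn' : Int.gcd (n' : ℤ) m = 1)
    (δ : ℕ) (hδ : 2 ≤ δ)
    (hroots : ∀ i < δ - 1, ∀ j < p ^ s,
      aeval ((γ ^ (f + (i : ℤ) * m) : Kˣ) : K) (hasseDeriv j g) = 0) :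
    ∀ c : F[X], c.degree < ((p ^ s * n' : ℕ) : WithBot ℕ) → g ∣ c → c ≠ 0 →
      δ ≤ c.support.card := by
  intro c hcdeg hgc hc0
  by_contra hlt
  push_neg at hlt
  haveI : Fact p.Prime := ⟨hp⟩
  set φ := algebraMap F K with hφdef
  have hφ : Function.Injective φ := (algebraMap F K).injective
  have hn'0 : 0 < n' := by
    rcases Nat.eq_zero_or_pos n' with h | h
    · exfalso
      rw [h] at hn'p
      exact hp.one_lt.ne' ((Nat.coprime_zero_left p).mp hn'p)
    · exact h
  set N := p ^ s with hNdef
  have hN0 : 0 < N := pow_pos hp.pos s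
  haveI hFp : CharP F p := by
    haveI : CharP F (ringChar F) := ringChar.charP F
    have hrp : (ringChar F).Prime := CharP.char_is_prime F (ringChar F)
    obtain ⟨n0, _, hcard⟩ := FiniteField.card F (ringChar F)
    have hpr : p = ringChar F := by
      have hdvd : p ∣ ringChar F ^ (n0 : ℕ) := by
        rw [← hcard, hq]; exact dvd_pow_self p ht.ne'
      exact (Nat.prime_dvd_prime_iff_eq hp hrp).mp (hp.dvd_of_dvd_pow hdvd)
    rwa [hpr]
  haveI hKp : CharP K p := charP_of_injective_algebraMap hφ p
  have hcnat : c.natDegree < N * n' := by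
    rwa [← Polynomial.natDegree_lt_iff_degree_lt hc0] at hcdeg
  set cb : ℕ → F[X] := fun b => ∑ k ∈ Finset.range n', C (c.coeff (b + N * k)) * X ^ k with hcb
  have hcoeff : ∀ b j, (cb b).coeff j = if j < n' then c.coeff (b + N * j) else 0 := by
    intro b j
    rw [hcb]
    simp only [Polynomial.finset_sum_coeff, Polynomial.coeff_C_mul, Polynomial.coeff_X_pow,
      mul_ite, mul_one, mul_zero]
    rw [Finset.sum_ite_eq (Finset.range n') j (fun k => c.coeff (b + N * k))]
    simp [Finset.mem_range]
  have hsupp : ∀ b, (cb b).support ⊆ Finset.range n' := by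
    intro b k hk
    have := Polynomial.mem_support_iff.mp hk
    rw [hcoeff] at this
    by_contra hk'
    rw [if_neg (fun hlt' => hk' (Finset.mem_range.mpr hlt'))] at this
    exact this rfl
  set u : Kˣ := γ ^ N with hu
  -- the key claim: every section vanishes at every u^(f+i*m)
  have claim : ∀ i < δ - 1, ∀ b' < N,
      ((cb b').map φ).eval ((u ^ (f + (i : ℤ) * m) : Kˣ) : K) = 0 := by
    intro i hi
    set α : K := ((γ ^ (f + (i : ℤ) * m) : Kˣ) : K) with hα
    set β : K := ((u ^ (f + (i : ℤ) * m) : Kˣ) : K) with hβ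
    have hβα : β = α ^ N := by
      rw [hβ, hα, ← Units.val_pow_eq_pow_val]
      congr 1
      rw [hu, ← zpow_natCast (γ ^ (f + (i : ℤ) * m)) N, ← zpow_natCast γ N,
        ← zpow_mul, ← zpow_mul, mul_comm]
    obtain ⟨e, hce⟩ := hgc
    have hder : ∀ j < N, (Polynomial.hasseDeriv j (c.map φ)).eval α = 0 := by
      intro j hj
      rw [hce, Polynomial.map_mul, Polynomial.hasseDeriv_mul, Polynomial.eval_finset_sum]
      refine Finset.sum_eq_zero fun ab hab => ?_
      have hab' := Finset.HasAntidiagonal.mem_antidiagonal.mp hab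
      rw [Polynomial.eval_mul, aux_hasseDeriv_map, Polynomial.eval_map, ← Polynomial.aeval_def]
      have h0 : aeval α (hasseDeriv ab.1 g) = 0 := hroots i hi ab.1 (by omega)
      rw [h0, zero_mul]
    have hdvd : (X ^ N - C β : K[X]) ∣ c.map φ := by
      have h2 := aux_pow_dvd_of_hasseDeriv (c.map φ) α N hder
      rwa [hNdef, sub_pow_char_pow, ← C_pow, ← hNdef, ← hβα] at h2
    set r : K[X] := ∑ b ∈ Finset.range N, C (((cb b).map φ).eval β) * X ^ b with hr
    have heval2 : ∀ b, ((cb b).map φ).eval β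
        = ∑ k ∈ Finset.range n', φ (c.coeff (b + N * k)) * β ^ k := by
      intro b
      rw [Polynomial.eval_map, hcb]
      simp only [Polynomial.eval₂_finset_sum, Polynomial.eval₂_mul, Polynomial.eval₂_C,
        Polynomial.eval₂_X_pow]
    have hmapsum : c.map φ = ∑ b ∈ Finset.range N, ∑ k ∈ Finset.range n',
        C (φ (c.coeff (b + N * k))) * X ^ (b + N * k) := by
      have hdeg' : (c.map φ).natDegree < N * n' :=
        lt_of_le_of_lt Polynomial.natDegree_map_le hcnat
      rw [← Finset.sum_product']
      conv_lhs => rw [Polynomial.as_sum_range' (c.map φ) (N * n') hdeg']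
      refine Finset.sum_nbij' (fun j => ((j % N, j / N) : ℕ × ℕ))
        (fun bk => bk.1 + N * bk.2) ?_ ?_ ?_ ?_ ?_
      · intro j hj
        rw [Finset.mem_range] at hj
        rw [Finset.mem_product, Finset.mem_range, Finset.mem_range]
        exact ⟨Nat.mod_lt _ hN0, (Nat.div_lt_iff_lt_mul hN0).mpr (by rwa [Nat.mul_comm] at hj)⟩
      · intro bk hbk
        rw [Finset.mem_product, Finset.mem_range, Finset.mem_range] at hbk
        rw [Finset.mem_range]
        have h1 : bk.1 + N * bk.2 < N * (bk.2 + 1) := by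
          rw [Nat.mul_succ]; omega
        exact lt_of_lt_of_le h1 (Nat.mul_le_mul_left N hbk.2)
      · intro j _; exact Nat.mod_add_div j N
      · intro bk hbk
        rw [Finset.mem_product, Finset.mem_range, Finset.mem_range] at hbk
        have h1 : (bk.1 + N * bk.2) % N = bk.1 := by
          rw [Nat.add_mul_mod_self_left, Nat.mod_eq_of_lt hbk.1]
        have h2 : (bk.1 + N * bk.2) / N = bk.2 := by
          rw [Nat.add_mul_div_left _ _ hN0, Nat.div_eq_of_lt hbk.1, zero_add]
        exact Prod.ext h1 h2
      · intro j _
        rw [Nat.mod_add_div j N, Polynomial.coeff_map, Polynomial.C_mul_X_pow_eq_monomial]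
    have hdiff : (X ^ N - C β : K[X]) ∣ c.map φ - r := by
      have hrw : r = ∑ b ∈ Finset.range N, ∑ k ∈ Finset.range n',
          C (φ (c.coeff (b + N * k))) * (C β) ^ k * X ^ b := by
        rw [hr]
        refine Finset.sum_congr rfl fun b _ => ?_
        rw [heval2, map_sum, Finset.sum_mul]
        refine Finset.sum_congr rfl fun k _ => ?_
        rw [map_mul, map_pow]
      rw [hmapsum, hrw, ← Finset.sum_sub_distrib]
      apply Finset.dvd_sum
      intro b _
      rw [← Finset.sum_sub_distrib]
      apply Finset.dvd_sum
      intro k _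
      have hterm : C (φ (c.coeff (b + N * k))) * X ^ (b + N * k)
          - C (φ (c.coeff (b + N * k))) * (C β) ^ k * X ^ b
          = (C (φ (c.coeff (b + N * k))) * X ^ b) * ((X ^ N) ^ k - (C β) ^ k) := by
        rw [pow_add, pow_mul]; ring
      rw [hterm]
      exact Dvd.dvd.mul_left (sub_dvd_pow_sub_pow _ _ k) _
    have hr0 : r = 0 := by
      have hrdvd : (X ^ N - C β : K[X]) ∣ r := by
        have hre : r = c.map φ - (c.map φ - r) := by ring
        rw [hre]
        exact dvd_sub hdvd hdiff
      apply Polynomial.eq_zero_of_dvd_of_degree_lt hrdvd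
      rw [Polynomial.degree_X_pow_sub_C hN0]
      apply lt_of_le_of_lt (Polynomial.degree_sum_le _ _)
      rw [Nat.cast_withBot, Finset.sup_lt_iff (WithBot.bot_lt_coe N)]
      intro b hb
      refine lt_of_le_of_lt (Polynomial.degree_C_mul_X_pow_le _ _) ?_
      rw [Nat.cast_withBot, WithBot.coe_lt_coe]
      exact Finset.mem_range.mp hb
    intro b' hb'
    have hco : r.coeff b' = ((cb b').map φ).eval β := by
      rw [hr]
      simp only [Polynomial.finset_sum_coeff, Polynomial.coeff_C_mul, Polynomial.coeff_X_pow,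
        mul_ite, mul_one, mul_zero]
      rw [Finset.sum_ite_eq (Finset.range N) b' (fun b => ((cb b).map φ).eval β),
        if_pos (Finset.mem_range.mpr hb')]
    rw [hr0, Polynomial.coeff_zero] at hco
    exact hco.symm
  -- pick a nonzero section
  obtain ⟨j0, hj0⟩ : ∃ j, c.coeff j ≠ 0 := by
    by_contra h
    push_neg at h
    exact hc0 (Polynomial.ext fun n => by simp [h n])
  have hj0lt : j0 < N * n' := by
    by_contra h
    exact hj0 (Polynomial.coeff_eq_zero_of_natDegree_lt (lt_of_lt_of_le hcnat (not_lt.mp h)))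
  set b0 := j0 % N with hb0
  have hb0N : b0 < N := Nat.mod_lt _ hN0
  have hk0 : j0 / N < n' := (Nat.div_lt_iff_lt_mul hN0).mpr (by rwa [Nat.mul_comm] at hj0lt)
  have hcbne : (cb b0).coeff (j0 / N) ≠ 0 := by
    rw [hcoeff, if_pos hk0, hb0, Nat.mod_add_div]
    exact hj0
  set T := (cb b0).support with hT
  have hTmem : j0 / N ∈ T := Polynomial.mem_support_iff.mpr hcbne
  have hTsub : T ⊆ Finset.range n' := hsupp b0
  have hTcard : T.card ≤ c.support.card := by
    apply Finset.card_le_card_of_injOn (fun k => b0 + N * k)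
    · intro k hk
      apply Polynomial.mem_support_iff.mpr
      have hk' := Polynomial.mem_support_iff.mp hk
      rwa [hcoeff, if_pos (Finset.mem_range.mp (hTsub hk))] at hk'
    · intro a _ a' _ h
      have h' : b0 + N * a = b0 + N * a' := h
      exact Nat.eq_of_mul_eq_mul_left hN0 (Nat.add_left_cancel h')
  have hTδ : T.card ≤ δ - 1 := by omega
  have horderu : orderOf u = n' := by
    have hgcd : Nat.gcd n' N = 1 := hn'p.pow_right s
    rw [hu, orderOf_pow' γ hN0.ne', hγ, hgcd, Nat.div_one]
  have hinj : Set.InjOn (fun k => (((u ^ m : Kˣ) : K)) ^ k) T := by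
    intro k hk k' hk' h
    have hkn : k < n' := Finset.mem_range.mp (hTsub hk)
    have hk'n : k' < n' := Finset.mem_range.mp (hTsub hk')
    have h' : (u ^ m) ^ k = (u ^ m) ^ k' := by
      apply Units.ext
      simpa [Units.val_pow_eq_pow_val] using h
    have h'' : u ^ (m * ((k : ℤ) - (k' : ℤ))) = 1 := by
      rw [zpow_mul, zpow_sub, ← zpow_natCast (u ^ m) k, ← zpow_natCast (u ^ m) k'] at *
      rw [h', mul_inv_cancel]
    have hdvd2 : (n' : ℤ) ∣ m * ((k : ℤ) - (k' : ℤ)) := by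
      rw [← horderu]
      exact orderOf_dvd_iff_zpow_eq_one.mpr h''
    have hcop : IsCoprime (n' : ℤ) m := Int.isCoprime_iff_gcd_eq_one.mpr hmn'
    have hdvd3 : (n' : ℤ) ∣ ((k : ℤ) - (k' : ℤ)) := hcop.dvd_of_dvd_mul_left hdvd2
    have habs : |(k : ℤ) - (k' : ℤ)| < (n' : ℤ) := by
      rw [abs_lt]; omega
    have := Int.eq_zero_of_abs_lt_dvd hdvd3 habs
    omega
  have hsums : ∀ i < T.card, ∑ k ∈ T,
      (φ ((cb b0).coeff k) * ((u ^ f : Kˣ) : K) ^ k) * ((((u ^ m : Kˣ) : K)) ^ k) ^ i = 0 := by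
    intro i hi
    have hi' : i < δ - 1 := by omega
    have h0 := claim i hi' b0 hb0N
    have hevalT : ((cb b0).map φ).eval ((u ^ (f + (i : ℤ) * m) : Kˣ) : K)
        = ∑ k ∈ T, φ ((cb b0).coeff k) * (((u ^ (f + (i : ℤ) * m) : Kˣ) : K)) ^ k := by
      rw [Polynomial.eval_eq_sum, Polynomial.sum, Polynomial.support_map_of_injective _ hφ]
      exact Finset.sum_congr rfl fun k _ => by rw [Polynomial.coeff_map]
    rw [hevalT] at h0
    rw [← h0]
    refine Finset.sum_congr rfl fun k _ => ?_
    have hunit : (u ^ (f + (i : ℤ) * m)) ^ k = ((u ^ f) ^ k) * (((u ^ m) ^ k) ^ i) := by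
      rw [← zpow_natCast (u ^ (f + (i : ℤ) * m)) k, ← zpow_mul,
        ← zpow_natCast (u ^ f) k, ← zpow_mul,
        ← zpow_natCast (u ^ m) k, ← zpow_mul,
        ← zpow_natCast (u ^ (m * (k : ℤ))) i, ← zpow_mul, ← zpow_add]
      congr 1; ring
    have hcast : (((u ^ (f + (i : ℤ) * m) : Kˣ)) : K) ^ k
        = ((u ^ f : Kˣ) : K) ^ k * ((((u ^ m : Kˣ) : K)) ^ k) ^ i := by
      rw [← Units.val_pow_eq_pow_val, hunit]
      simp [Units.val_mul, Units.val_pow_eq_pow_val]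
    rw [hcast]; ring
  have hzero := aux_vandermonde T _ _ hinj hsums (j0 / N) hTmem
  rcases mul_eq_zero.mp hzero with h | h
  · apply hcbne
    apply hφ
    rwa [map_zero]
  · exact pow_ne_zero _ (Units.ne_zero _) h
end

section
/- Let C be a linear [n,k,d] repeated-root cyclic code over F_q (q a power of the prime p) of length n = p^s·n' with gcd(n',p) = 1, whose generator polynomial g satisfies deg g ≥ p^s − 1. Let γ be an element of order n' in an extension field of F_q. Suppose there are integers f, m ≠ 0, δ ≥ 2 and ν ≥ 0 with gcd(n',m) = 1 such that for every codeword c(X) ∈ C and every j ∈ {0, 1, …, ν}, the formal power series Σ_{i=0}^∞ c^{[p^s−1]}(γ^{f+im+j}) X^i is congruent to 0 modulo X^{δ−1}. Then the minimum Hamming distance of C satisfies d ≥ δ + ν. -/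
/-!
Shift a nonzero codeword `c` cyclically so that its leading coefficient sits at position
`p ^ s - 1`; the shifted word `c'` is again a codeword and is no heavier. By Lucas' theorem,
`binom(i, p ^ s - 1) ≡ [p ^ s ∣ i + 1] (mod p)`, so the Hasse derivative `c'^{[p ^ s - 1]}` is
`u(X ^ p ^ s)`, where `u` collects the coefficients of `c'` at the positions `≡ -1 (mod p ^ s)`.
Thus `u` is a nonzero polynomial of degree `< n'`, no heavier than `c`, vanishing at
`β ^ (f + i m + j)` with `β = γ ^ p ^ s` of order `n'`. The Hartmann–Tzeng bound for `u` is a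
rank count: with `x_l = β ^ (m l)`, `y_l = β ^ l` and `a_l = u_l β ^ (f l)` for `l` in the support
of `u`, the matrices `(x_l ^ i)_{i,l}` and `(a_l y_l ^ j)_{l,j}` multiply to zero, and both have
full rank by Vandermonde.
-/

open Polynomial

theorem Nat.cast_choose_eq_cast_choose_mod_pow {R : Type*} [CommRing R] (p : ℕ) [Fact p.Prime]
    [CharP R p] {s k : ℕ} (hk : k < p ^ s) (n : ℕ) :
    (n.choose k : R) = ((n % p ^ s).choose k : R) := by
  have hfrob : (X : R[X]) ^ p ^ s + 1 = (X + 1) ^ p ^ s := by rw [add_pow_char_pow, one_pow]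
  have hsplit : ((X : R[X]) + 1) ^ n =
      (X + 1) ^ (n % p ^ s) + (X + 1) ^ (n % p ^ s) * ((X ^ p ^ s + 1) ^ (n / p ^ s) - 1) := by
    rw [mul_sub, mul_one, add_sub_cancel, hfrob, ← pow_mul, ← pow_add, Nat.mod_add_div]
  have hdvd : (X : R[X]) ^ p ^ s ∣ (X ^ p ^ s + 1) ^ (n / p ^ s) - 1 := by
    have := sub_dvd_pow_sub_pow (X ^ p ^ s + 1 : R[X]) 1 (n / p ^ s)
    rwa [add_sub_cancel_right, one_pow] at this
  rw [← coeff_X_add_one_pow, ← coeff_X_add_one_pow, hsplit, coeff_add,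
    X_pow_dvd_iff.mp (hdvd.mul_left _) k hk, add_zero]

theorem Nat.cast_choose_add_pow_sub_one {R : Type*} [CommRing R] (p : ℕ) [Fact p.Prime]
    [CharP R p] (s n : ℕ) :
    ((n + (p ^ s - 1)).choose (p ^ s - 1) : R) = if p ^ s ∣ n then 1 else 0 := by
  have hq : 0 < p ^ s := pow_pos (Fact.out : p.Prime).pos s
  have hlt := Nat.mod_lt n hq
  rw [Nat.cast_choose_eq_cast_choose_mod_pow p (Nat.sub_lt hq one_pos), Nat.add_mod,
    Nat.mod_eq_of_lt (Nat.sub_lt hq one_pos)]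
  by_cases h : p ^ s ∣ n
  · rw [if_pos h, Nat.eq_zero_of_dvd_of_lt ((Nat.dvd_mod_iff dvd_rfl).2 h) hlt, zero_add,
      Nat.mod_eq_of_lt (Nat.sub_lt hq one_pos), Nat.choose_self, Nat.cast_one]
  · have h0 : n % p ^ s ≠ 0 := fun h0 => h (Nat.dvd_of_mod_eq_zero h0)
    rw [if_neg h, show n % p ^ s + (p ^ s - 1) = n % p ^ s - 1 + p ^ s by omega,
      Nat.add_mod_right, Nat.mod_eq_of_lt (by omega), Nat.choose_eq_zero_of_lt (by omega),
      Nat.cast_zero]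

namespace Polynomial

theorem expand_contract_of_coeff_eq_zero {R : Type*} [CommSemiring R] {q : ℕ} (hq : q ≠ 0)
    {f : R[X]} (hf : ∀ n, ¬ q ∣ n → f.coeff n = 0) : expand R q (contract q f) = f := by
  ext n
  rw [coeff_expand (Nat.pos_of_ne_zero hq), coeff_contract hq]
  split_ifs with h
  · rw [Nat.div_mul_cancel h]
  · exact (hf n h).symm

section HasseDeriv

variable {R : Type*} [CommRing R] (p : ℕ) [Fact p.Prime] [CharP R p] (s : ℕ) (c : R[X])

theorem coeff_hasseDeriv_prime_pow_sub_one (n : ℕ) :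
    (hasseDeriv (p ^ s - 1) c).coeff n = if p ^ s ∣ n then c.coeff (n + (p ^ s - 1)) else 0 := by
  rw [hasseDeriv_coeff, Nat.cast_choose_add_pow_sub_one, ite_mul, one_mul, zero_mul]

theorem expand_contract_hasseDeriv_prime_pow_sub_one :
    expand R (p ^ s) (contract (p ^ s) (hasseDeriv (p ^ s - 1) c)) = hasseDeriv (p ^ s - 1) c :=
  expand_contract_of_coeff_eq_zero (pow_ne_zero s (Fact.out : p.Prime).ne_zero) fun n hn => by
    rw [coeff_hasseDeriv_prime_pow_sub_one, if_neg hn]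

theorem aeval_hasseDeriv_prime_pow_sub_one {A : Type*} [CommSemiring A] [Algebra R A] (z : A) :
    aeval z (hasseDeriv (p ^ s - 1) c) =
      aeval (z ^ p ^ s) (contract (p ^ s) (hasseDeriv (p ^ s - 1) c)) := by
  rw [← expand_aeval, expand_contract_hasseDeriv_prime_pow_sub_one]

theorem coeff_contract_hasseDeriv_prime_pow_sub_one (r : ℕ) :
    (contract (p ^ s) (hasseDeriv (p ^ s - 1) c)).coeff r = c.coeff (r * p ^ s + (p ^ s - 1)) := by
  rw [coeff_contract (pow_ne_zero s (Fact.out : p.Prime).ne_zero),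
    coeff_hasseDeriv_prime_pow_sub_one, if_pos (dvd_mul_left _ _)]

theorem contract_hasseDeriv_ne_zero (hc : c.coeff (p ^ s - 1) ≠ 0) :
    contract (p ^ s) (hasseDeriv (p ^ s - 1) c) ≠ 0 := fun h => hc <| by
  simpa [coeff_contract_hasseDeriv_prime_pow_sub_one] using congrArg (coeff · 0) h

theorem card_support_contract_hasseDeriv_le :
    (contract (p ^ s) (hasseDeriv (p ^ s - 1) c)).support.card ≤ c.support.card := by
  refine Finset.card_le_card_of_injOn (fun r => r * p ^ s + (p ^ s - 1)) (fun r hr => ?_) ?_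
  · simpa [coeff_contract_hasseDeriv_prime_pow_sub_one] using hr
  · intro r _ r' _ h
    exact Nat.eq_of_mul_eq_mul_right (pow_pos (Fact.out : p.Prime).pos s) (Nat.add_right_cancel h)

theorem degree_contract_hasseDeriv_lt {N : ℕ} (hc : c.degree < (p ^ s * N : ℕ)) :
    (contract (p ^ s) (hasseDeriv (p ^ s - 1) c)).degree < N := by
  rw [degree_lt_iff_coeff_zero]
  intro r hr
  rw [coeff_contract_hasseDeriv_prime_pow_sub_one]
  refine coeff_eq_zero_of_degree_lt (hc.trans_le ?_)
  exact_mod_cast (mul_comm (p ^ s) N ▸ Nat.mul_le_mul_right _ hr).trans (Nat.le_add_right _ _)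

end HasseDeriv

section CyclicShift

variable {R : Type*} [CommRing R] (n k : ℕ)

noncomputable def cyclicShift (c : R[X]) : R[X] :=
  c.sum fun i a => monomial ((i + k) % n) a

theorem cyclicShift_add (c d : R[X]) :
    cyclicShift n k (c + d) = cyclicShift n k c + cyclicShift n k d :=
  sum_add_index _ _ _ (fun _ => monomial_zero_right _) fun _ => map_add _

theorem cyclicShift_monomial (i : ℕ) (a : R) :
    cyclicShift n k (monomial i a) = monomial ((i + k) % n) a :=
  sum_monomial_index _ _ (monomial_zero_right _)

theorem coeff_cyclicShift (c : R[X]) (j : ℕ) :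
    (cyclicShift n k c).coeff j = ∑ i ∈ c.support with (i + k) % n = j, c.coeff i := by
  simp only [cyclicShift, Polynomial.sum_def, finsetSum_coeff, coeff_monomial, Finset.sum_filter]

theorem coeff_cyclicShift_add_mod {c : R[X]} (hc : c.degree < n) {i : ℕ} (hi : i < n) :
    (cyclicShift n k c).coeff ((i + k) % n) = c.coeff i := by
  have hlt : ∀ i' ∈ c.support, i' < n := fun i' hi' => lt_of_not_ge fun h =>
    mem_support_iff.mp hi' (coeff_eq_zero_of_degree_lt (hc.trans_le (by exact_mod_cast h)))
  rw [coeff_cyclicShift, Finset.sum_filter]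
  refine (Finset.sum_eq_single i (fun i' hi' hne => if_neg fun h => hne ?_) fun h => ?_).trans
    (if_pos rfl)
  · have := Nat.ModEq.add_right_cancel' k h
    rwa [Nat.ModEq, Nat.mod_eq_of_lt (hlt i' hi'), Nat.mod_eq_of_lt hi] at this
  · rw [notMem_support_iff.mp h, ite_self]

theorem coeff_cyclicShift_eq_leadingCoeff {c : R[X]} (hc : c.natDegree < n) {j : ℕ} (hj : j < n) :
    (cyclicShift n (n + j - c.natDegree) c).coeff j = c.leadingCoeff := by
  have := coeff_cyclicShift_add_mod n (n + j - c.natDegree)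
    (degree_le_natDegree.trans_lt (by exact_mod_cast hc)) hc
  rwa [show c.natDegree + (n + j - c.natDegree) = j + n by omega, Nat.add_mod_right,
    Nat.mod_eq_of_lt hj] at this

theorem card_support_cyclicShift_le (c : R[X]) :
    (cyclicShift n k c).support.card ≤ c.support.card := by
  refine (Finset.card_le_card fun j hj => ?_).trans
    (Finset.card_image_le (f := fun i => (i + k) % n))
  obtain ⟨i, hi, -⟩ :=
    Finset.exists_ne_zero_of_sum_ne_zero (coeff_cyclicShift n k c j ▸ mem_support_iff.mp hj)
  exact Finset.mem_image.mpr ⟨i, (Finset.mem_filter.mp hi).1, (Finset.mem_filter.mp hi).2⟩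

theorem degree_cyclicShift_lt (hn : 0 < n) (c : R[X]) : (cyclicShift n k c).degree < n := by
  refine (degree_lt_iff_coeff_zero _ _).mpr fun j hj => ?_
  rw [coeff_cyclicShift]
  exact Finset.sum_eq_zero fun i hi =>
    absurd (Finset.mem_filter.mp hi).2 fun h => (h ▸ Nat.mod_lt _ hn).not_ge hj

theorem X_pow_sub_one_dvd_X_pow_mul_sub_cyclicShift (c : R[X]) :
    X ^ n - 1 ∣ X ^ k * c - cyclicShift n k c := by
  induction c using Polynomial.induction_on' with
  | add c d hc hd => simpa only [cyclicShift_add, mul_add, add_sub_add_comm] using dvd_add hc hd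
  | monomial i a =>
    have hsplit : X ^ k * monomial i a - monomial ((i + k) % n) a =
        C a * X ^ ((i + k) % n) * ((X ^ n) ^ ((i + k) / n) - 1) := by
      rw [← C_mul_X_pow_eq_monomial, ← C_mul_X_pow_eq_monomial, ← pow_mul, mul_sub,
        mul_assoc, ← pow_add, Nat.mod_add_div]
      ring
    rw [cyclicShift_monomial, hsplit]
    exact dvd_mul_of_dvd_right (by simpa using sub_dvd_pow_sub_pow (X ^ n : R[X]) 1 _) _

theorem dvd_cyclicShift {g c : R[X]} (hg : g ∣ X ^ n - 1) (hgc : g ∣ c) :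
    g ∣ cyclicShift n k c := by
  have := dvd_sub (hgc.mul_left (X ^ k))
    (hg.trans (X_pow_sub_one_dvd_X_pow_mul_sub_cyclicShift n k c))
  rwa [sub_sub_cancel] at this

end CyclicShift

end Polynomial

theorem zpow_pow_injOn_Iio_orderOf {G : Type*} [Group G] {x : G} {m : ℤ}
    (hm : Int.gcd (orderOf x) m = 1) : (Set.Iio (orderOf x)).InjOn fun e : ℕ => (x ^ m) ^ e := by
  intro e he e' he' h
  have hdvd : (orderOf x : ℤ) ∣ m * (e - e') := by
    rw [mul_sub, orderOf_dvd_sub_iff_zpow_eq_zpow, zpow_mul, zpow_mul, zpow_natCast, zpow_natCast]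
    exact h
  have he0 : (e : ℤ) - e' = 0 :=
    Int.eq_zero_of_abs_lt_dvd (Int.dvd_of_dvd_mul_right_of_gcd_one hdvd hm)
      (by rw [abs_lt]; simp only [Set.mem_Iio] at he he'; omega)
  omega

theorem Matrix.rank_of_mul_pow {K ι : Type*} [Field K] [Fintype ι] {a x : ι → K}
    (ha : ∀ l, a l ≠ 0) (hx : Function.Injective x) {r : ℕ} (hr : r ≤ Fintype.card ι) :
    (Matrix.of fun (i : Fin r) (l : ι) => a l * x l ^ (i : ℕ)).rank = r := by
  obtain ⟨e⟩ : Nonempty (Fin r ↪ ι) := Function.Embedding.nonempty_of_card_le (by simpa using hr)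
  refine (LinearIndependent.rank_matrix ?_).trans (Fintype.card_fin r)
  rw [Fintype.linearIndependent_iff]
  intro g hg
  refine congrFun (Matrix.eq_zero_of_forall_index_sum_mul_pow_eq_zero (hx.comp e.injective)
    fun k => ?_)
  have hk := congrFun hg (e k)
  simp only [Finset.sum_apply, Pi.smul_apply, Matrix.row, Matrix.of_apply, smul_eq_mul] at hk
  simpa [mul_left_comm (g _), ← Finset.mul_sum, ha] using hk

theorem add_le_card_of_sum_mul_pow_mul_pow_eq_zero {K ι : Type*} [Field K] [Fintype ι]
    {a x y : ι → K} (ha : ∀ l, a l ≠ 0) (hx : Function.Injective x) (hy : Function.Injective y)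
    {r J : ℕ} (hr : r ≤ Fintype.card ι) (hJ : J ≤ Fintype.card ι)
    (h : ∀ i < r, ∀ j < J, ∑ l, a l * x l ^ i * y l ^ j = 0) : r + J ≤ Fintype.card ι := by
  have hAB : (Matrix.of fun (i : Fin r) l => 1 * x l ^ (i : ℕ)) *
      (Matrix.of fun (j : Fin J) l => a l * y l ^ (j : ℕ)).transpose = 0 := by
    ext i j
    rw [Matrix.mul_apply, Matrix.zero_apply, ← h i i.2 j j.2]
    exact Finset.sum_congr rfl fun l _ => by
      simp only [Matrix.of_apply, Matrix.transpose_apply]; ring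
  have := Matrix.rank_add_rank_le_card_of_mul_eq_zero hAB
  rwa [Matrix.rank_transpose, Matrix.rank_of_mul_pow (fun _ => one_ne_zero) hx hr,
    Matrix.rank_of_mul_pow ha hy hJ] at this

theorem Polynomial.hartmannTzeng_bound {F K : Type*} [Field F] [Field K] [Algebra F K]
    {β : Kˣ} {m : ℤ} (hm : Int.gcd (orderOf β) m = 1) (f : ℤ) {δ ν : ℕ} (hδ : 2 ≤ δ)
    {u : F[X]} (hu : u ≠ 0) (hdeg : u.degree < orderOf β)
    (h : ∀ j ≤ ν, ∀ i < δ - 1, aeval ((β ^ (f + i * m + j) : Kˣ) : K) u = 0) :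
    δ + ν ≤ u.support.card := by
  have hlt : ∀ e ∈ u.support, e < orderOf β := fun e he => lt_of_not_ge fun h =>
    mem_support_iff.mp he (coeff_eq_zero_of_degree_lt (hdeg.trans_le (by exact_mod_cast h)))
  have hinj : ∀ n : ℤ, Int.gcd (orderOf β) n = 1 →
      Function.Injective fun e : u.support => (((β ^ n) ^ (e : ℕ) : Kˣ) : K) :=
    fun n hn e e' hee' => Subtype.ext
      (zpow_pow_injOn_Iio_orderOf hn (hlt e e.2) (hlt e' e'.2) (Units.ext hee'))
  have hsum : ∀ i < δ - 1, ∀ j < ν + 1, ∑ e : u.support,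
      algebraMap F K (u.coeff e) * (((β ^ f) ^ (e : ℕ) : Kˣ) : K) *
        (((β ^ m) ^ (e : ℕ) : Kˣ) : K) ^ i * (((β ^ (1 : ℤ)) ^ (e : ℕ) : Kˣ) : K) ^ j = 0 := by
    intro i hi j hj
    rw [← h j (by omega) i hi, aeval_def, eval₂_eq_sum, Polynomial.sum_def,
      ← Finset.sum_coe_sort u.support]
    refine Finset.sum_congr rfl fun e _ => ?_
    have hunits : (β ^ f) ^ (e : ℕ) * ((β ^ m) ^ (e : ℕ)) ^ i * ((β ^ (1 : ℤ)) ^ (e : ℕ)) ^ j =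
        (β ^ (f + i * m + j)) ^ (e : ℕ) := by
      simp only [← zpow_natCast, ← zpow_mul, ← zpow_add]
      ring_nf
    rw [← Units.val_pow_eq_pow_val (β ^ (f + i * m + j)), ← hunits]
    push_cast
    ring
  have key := add_le_card_of_sum_mul_pow_mul_pow_eq_zero
    (fun e => mul_ne_zero ((_root_.map_ne_zero (algebraMap F K)).mpr (mem_support_iff.mp e.2))
      (Units.ne_zero _))
    (hinj m hm) (hinj 1 (Int.gcd_one_right _)) (min_le_right (δ - 1) _) (min_le_right (ν + 1) _)
    fun i hi j hj => hsum i (lt_min_iff.mp hi).1 j (lt_min_iff.mp hj).1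
  have hw : 0 < u.support.card := Finset.card_pos.mpr (support_nonempty.mpr hu)
  rw [Fintype.card_coe] at key
  omega

theorem repeatedRoot_HT_bound_general
    {F K : Type*} [Field F] [Fintype F] [Field K] [Algebra F K]
    (p t s n' : ℕ) (hp : p.Prime) (hq : Fintype.card F = p ^ t)
    (hn'p : Nat.Coprime n' p)
    (g : F[X]) (hg_dvd : g ∣ X ^ (p ^ s * n') - 1)
    (γ : Kˣ) (hγ : orderOf γ = n')
    (f m : ℤ) (hmn' : Int.gcd (n' : ℤ) m = 1)
    (δ ν : ℕ) (hδ : 2 ≤ δ)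
    (hzero : ∀ c : F[X], c.degree < ((p ^ s * n' : ℕ) : WithBot ℕ) → g ∣ c →
      ∀ j ≤ ν, ∀ i < δ - 1,
        aeval ((γ ^ (f + (i : ℤ) * m + (j : ℤ)) : Kˣ) : K)
          (hasseDeriv (p ^ s - 1) c) = 0) :
    ∀ c : F[X], c.degree < ((p ^ s * n' : ℕ) : WithBot ℕ) → g ∣ c → c ≠ 0 →
      δ + ν ≤ c.support.card := by
  intro c hc_deg hgc hc0
  have := Fact.mk hp
  have := charP_of_card_eq_prime_pow hq
  have hq0 : 0 < p ^ s := pow_pos hp.pos s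
  have hn' : 0 < n' := Nat.pos_of_ne_zero fun h => hp.one_lt.ne' (by simpa [h] using hn'p)
  set c' := cyclicShift (p ^ s * n') (p ^ s * n' + (p ^ s - 1) - c.natDegree) c
  have hc'_deg : c'.degree < ((p ^ s * n' : ℕ) : WithBot ℕ) :=
    degree_cyclicShift_lt _ _ (Nat.mul_pos hq0 hn') c
  have hc'_coeff : c'.coeff (p ^ s - 1) = c.leadingCoeff :=
    coeff_cyclicShift_eq_leadingCoeff _ ((natDegree_lt_iff_degree_lt hc0).mpr hc_deg)
      ((Nat.sub_lt hq0 one_pos).trans_le (Nat.le_mul_of_pos_right _ hn'))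
  have hβ : orderOf (γ ^ p ^ s) = n' := by
    rw [Nat.Coprime.orderOf_pow (hγ ▸ hn'p.pow_right s), hγ]
  calc δ + ν ≤ (contract (p ^ s) (hasseDeriv (p ^ s - 1) c')).support.card := by
        refine hartmannTzeng_bound (hβ ▸ hmn') f hδ
          (contract_hasseDeriv_ne_zero p s c' (hc'_coeff ▸ leadingCoeff_ne_zero.mpr hc0))
          (hβ ▸ degree_contract_hasseDeriv_lt p s c' hc'_deg) fun j hj i hi => ?_
        rw [← zpow_natCast γ, ← zpow_mul, mul_comm, zpow_mul, zpow_natCast,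
          Units.val_pow_eq_pow_val, ← aeval_hasseDeriv_prime_pow_sub_one]
        exact hzero c' hc'_deg (dvd_cyclicShift _ _ hg_dvd hgc) j hj i hi
    _ ≤ c'.support.card := card_support_contract_hasseDeriv_le p s c'
    _ ≤ c.support.card := card_support_cyclicShift_le _ _ c

/-- **Bound II (HT-like bound for repeated-root cyclic codes).**
With the setup of the BCH-like bound, suppose that for every codeword `c` of the
repeated-root cyclic code `C` and for every `j ∈ {0, …, ν}` the first `δ - 1`
coefficients of the power series `Σ_i c^{[p^s-1]}(γ^{f+im+j}) X^i` vanish.  Then the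
minimum Hamming distance of `C` is at least `δ + ν`. -/
theorem repeatedRoot_HT_bound
    {F K : Type*} [Field F] [Fintype F] [Field K] [Algebra F K]
    (p t s n' : ℕ) (hp : p.Prime) (hq : Fintype.card F = p ^ t) (ht : 0 < t)
    (hn'p : Nat.Coprime n' p)
    (g : F[X]) (hg_monic : g.Monic) (hg_dvd : g ∣ X ^ (p ^ s * n') - 1)
    (hg_deg : p ^ s - 1 ≤ g.natDegree)
    (γ : Kˣ) (hγ : orderOf γ = n')
    (f m : ℤ) (hm : m ≠ 0) (hmn' : Int.gcd (n' : ℤ) m = 1)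
    (δ ν : ℕ) (hδ : 2 ≤ δ)
    (hzero : ∀ c : F[X], c.degree < ((p ^ s * n' : ℕ) : WithBot ℕ) → g ∣ c →
      ∀ j ≤ ν, ∀ i < δ - 1,
        aeval ((γ ^ (f + (i : ℤ) * m + (j : ℤ)) : Kˣ) : K)
          (hasseDeriv (p ^ s - 1) c) = 0) :
    ∀ c : F[X], c.degree < ((p ^ s * n' : ℕ) : WithBot ℕ) → g ∣ c → c ≠ 0 →
      δ + ν ≤ c.support.card :=
  repeatedRoot_HT_bound_general p t s n' hp hq hn'p g hg_dvd γ hγ f m hmn' δ ν hδ hzero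
end

section
/- Let C be a linear [n,k,d] repeated-root cyclic code over F_q (q a power of the prime p) of length n = p^s·n' with gcd(n',p) = 1 and generator polynomial g, and let γ be an element of order n' in an extension field of F_q. Suppose there are integers f, m ≠ 0, δ ≥ 2 and ν ≥ 0 with gcd(n',m) = 1 such that γ^{f+im+j} is a root of g of multiplicity at least p^s for every i = 0, 1, …, δ−2 and every j = 0, 1, …, ν (i.e., g has ν+1 shifted sequences of δ−1 consecutive zeros, each of multiplicity p^s). Then the minimum Hamming distance of C satisfies d ≥ δ + ν. -/
open Polynomial

lemma vdm_indep {K : Type*} [Field K] {ι : Type*} [Fintype ι] (x ζ : ι → K)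
    (hx : ∀ r, x r ≠ 0) (hζ : Function.Injective ζ) (k : ℕ) (hk : k ≤ Fintype.card ι) :
    LinearIndependent K (fun i : Fin k => fun r : ι => x r * ζ r ^ (i : ℕ)) := by
  rw [Fintype.linearIndependent_iff]
  intro lam hlam i0
  set P : K[X] := ∑ i : Fin k, C (lam i) * X ^ (i : ℕ) with hP
  have hdeg : P.natDegree < k := by
    have h1 : P.natDegree ≤ k - 1 :=
      natDegree_sum_le_of_forall_le _ _ (fun i _ => le_trans
        (natDegree_C_mul_X_pow_le (lam i) (i : ℕ)) (by omega))
    have : 0 < k := i0.pos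
    omega
  have heval : ∀ r : ι, P.eval (ζ r) = 0 := by
    intro r
    have h2 := congrFun hlam r
    simp only [Finset.sum_apply, Pi.smul_apply, smul_eq_mul, Pi.zero_apply] at h2
    have h3 : x r * ∑ i : Fin k, lam i * ζ r ^ (i : ℕ) = 0 := by
      rw [Finset.mul_sum]; rw [← h2]; exact Finset.sum_congr rfl fun i _ => by ring
    have h4 := (mul_eq_zero.mp h3).resolve_left (hx r)
    simp only [hP, eval_finset_sum, eval_mul, eval_C, eval_pow, eval_X]
    exact h4
  have hP0 : P = 0 :=
    eq_zero_of_natDegree_lt_card_of_eval_eq_zero P hζ heval (lt_of_lt_of_le hdeg hk)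
  have : P.coeff (i0 : ℕ) = lam i0 := by
    rw [hP, finset_sum_coeff]
    rw [Finset.sum_eq_single i0]
    · simp
    · intro b _ hb
      rw [coeff_C_mul, coeff_X_pow, if_neg (fun h => hb (Fin.ext h.symm)), mul_zero]
    · intro h; exact absurd (Finset.mem_univ i0) h
  rw [hP0, coeff_zero] at this
  exact this.symm

lemma ab_aux {K : Type*} [Field K] {ι : Type*} [Fintype ι] [Nonempty ι]
    (z : ι → K) (r0 : ι) (hz : z r0 ≠ 0)
    (fam : Fin (Fintype.card ι) → (ι → K)) (hindep : LinearIndependent K fam)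
    (horth : ∀ i, ∑ r, fam i r * z r = 0) : False := by
  classical
  have hcard : Fintype.card (Fin (Fintype.card ι)) = Module.finrank K (ι → K) := by
    simp [Module.finrank_pi]
  let b := basisOfLinearIndependentOfCardEqFinrank hindep hcard
  let φ : (ι → K) →ₗ[K] K :=
    { toFun := fun v => ∑ r, v r * z r
      map_add' := by intro u v; simp [add_mul, Finset.sum_add_distrib]
      map_smul' := by intro a v; simp [Finset.mul_sum, mul_assoc] }
  have hφ : φ = 0 := by
    apply b.ext
    intro i
    have hb : b i = fam i := by
      simp [b, coe_basisOfLinearIndependentOfCardEqFinrank]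
    simp only [hb, LinearMap.zero_apply]
    exact horth i
  have h2 := congrArg (fun ψ => ψ (Pi.single r0 1)) hφ
  simp only [φ, LinearMap.coe_mk, AddHom.coe_mk, LinearMap.zero_apply] at h2
  rw [Finset.sum_eq_single r0] at h2
  · rw [Pi.single_eq_same, one_mul] at h2; exact hz h2
  · intro r _ hr; rw [Pi.single_eq_of_ne hr, zero_mul]
  · intro h; exact absurd (Finset.mem_univ r0) h

open Matrix in
lemma ab_core {K : Type*} [Field K] {ι : Type*} [Fintype ι] [Nonempty ι]
    (x y ζ η : ι → K) (hx : ∀ r, x r ≠ 0) (hy : ∀ r, y r ≠ 0)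
    (hζ : Function.Injective ζ) (hη : Function.Injective η)
    (α β : ℕ) (hα : 0 < α) (hβ : 0 < β)
    (horth : ∀ i < α, ∀ j < β, ∑ r, (x r * ζ r ^ i) * (y r * η r ^ j) = 0) :
    α + β ≤ Fintype.card ι := by
  classical
  set w := Fintype.card ι with hw
  have hw0 : 0 < w := Fintype.card_pos
  by_cases hαw : α ≤ w
  on_goal 2 =>
    exfalso
    refine ab_aux y (Classical.arbitrary ι) (hy _)
      (fun i : Fin w => fun r => x r * ζ r ^ (i : ℕ)) (vdm_indep x ζ hx hζ w le_rfl) ?_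
    intro i
    have h := horth (i : ℕ) (lt_trans i.2 (lt_of_not_ge hαw)) 0 hβ
    simpa using h
  by_cases hβw : β ≤ w
  on_goal 2 =>
    exfalso
    refine ab_aux x (Classical.arbitrary ι) (hx _)
      (fun j : Fin w => fun r => y r * η r ^ (j : ℕ)) (vdm_indep y η hy hη w le_rfl) ?_
    intro j
    have h := horth 0 hα (j : ℕ) (lt_trans j.2 (lt_of_not_ge hβw))
    simp only [pow_zero, mul_one] at h
    rw [← h]
    exact Finset.sum_congr rfl fun r _ => by ring
  have hA := vdm_indep x ζ hx hζ α hαw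
  have hB := vdm_indep y η hy hη β hβw
  set M : Matrix (Fin β) ι K := Matrix.of (fun j r => y r * η r ^ (j : ℕ)) with hM
  have hkerT : LinearMap.ker (Mᵀ.mulVecLin) = ⊥ := by
    rw [LinearMap.ker_eq_bot']
    intro v hv
    have h1 : ∑ j : Fin β, v j • (fun r => y r * η r ^ (j : ℕ)) = 0 := by
      funext r
      have h2 := congrFun hv r
      simp only [Matrix.mulVecLin_apply, Matrix.mulVec, dotProduct,
        Matrix.transpose_apply, Pi.zero_apply] at h2
      simp only [Finset.sum_apply, Pi.smul_apply, smul_eq_mul, Pi.zero_apply]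
      rw [← h2]
      exact Finset.sum_congr rfl fun j _ => by simp [hM]; ring
    have := Fintype.linearIndependent_iff.mp hB v h1
    funext j; exact this j
  have hrangeT : Module.finrank K (LinearMap.range Mᵀ.mulVecLin) = β := by
    have h := LinearMap.finrank_range_add_finrank_ker (Mᵀ.mulVecLin)
    rw [hkerT, finrank_bot] at h
    simpa [Module.finrank_pi] using h
  have hrank : M.rank = β := by
    rw [← Matrix.rank_transpose, Matrix.rank, hrangeT]
  have hkerM : Module.finrank K (LinearMap.ker M.mulVecLin) = w - β := by
    have h := LinearMap.finrank_range_add_finrank_ker (M.mulVecLin)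
    rw [Module.finrank_pi] at h
    have : Module.finrank K (LinearMap.range M.mulVecLin) = β := hrank
    omega
  have hsub : Submodule.span K (Set.range (fun i : Fin α => fun r => x r * ζ r ^ (i : ℕ)))
      ≤ LinearMap.ker M.mulVecLin := by
    rw [Submodule.span_le]
    rintro _ ⟨i, rfl⟩
    simp only [SetLike.mem_coe, LinearMap.mem_ker]
    funext j
    simp only [Matrix.mulVecLin_apply, Matrix.mulVec, dotProduct, Pi.zero_apply]
    have h := horth (i : ℕ) i.2 (j : ℕ) j.2
    rw [← h]
    exact Finset.sum_congr rfl fun r _ => by simp [hM]; ring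
  have hα' : α ≤ w - β := by
    have h1 : Module.finrank K (Submodule.span K
        (Set.range (fun i : Fin α => fun r => x r * ζ r ^ (i : ℕ)))) = α := by
      rw [finrank_span_eq_card hA, Fintype.card_fin]
    rw [← h1, ← hkerM]
    exact Submodule.finrank_mono hsub
  omega

lemma hasseDeriv_map' {R S : Type*} [CommSemiring R] [CommSemiring S] (φ : R →+* S)
    (k : ℕ) (c : R[X]) :
    hasseDeriv k (c.map φ) = (hasseDeriv k c).map φ := by
  ext n
  simp [hasseDeriv_coeff, coeff_map]

lemma pow_inj_of_gcd_one {K : Type*} [Field K] (n' : ℕ) (γ : Kˣ) (hγ : orderOf γ = n')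
    (a : ℤ) (ha : Int.gcd (n' : ℤ) a = 1) (r r' : ℕ) (hr : r < n') (hr' : r' < n')
    (h : γ ^ (a * (r : ℤ)) = γ ^ (a * (r' : ℤ))) : r = r' := by
  have h2 : γ ^ (a * (r : ℤ) - a * (r' : ℤ)) = 1 := by
    rw [zpow_sub, h]; exact mul_inv_cancel _
  have h3 : ((n' : ℤ)) ∣ a * ((r : ℤ) - (r' : ℤ)) := by
    have h4 := (orderOf_dvd_iff_zpow_eq_one).mpr h2
    rw [hγ] at h4
    have : a * (r : ℤ) - a * (r' : ℤ) = a * ((r : ℤ) - (r' : ℤ)) := by ring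
    rwa [this] at h4
  have h5 : ((n' : ℤ)) ∣ ((r : ℤ) - (r' : ℤ)) := by
    refine Int.dvd_of_dvd_mul_left_of_gcd_one ?_ ha
    rwa [mul_comm] at h3
  have h6 : n' ∣ ((r : ℤ) - (r' : ℤ)).natAbs := Int.natCast_dvd.mp h5
  have h7 : ((r : ℤ) - (r' : ℤ)).natAbs < n' := by omega
  have := Nat.eq_zero_of_dvd_of_lt h6 h7
  omega

lemma unit_pow_arith {K : Type*} [Field K] (γ : Kˣ) (f m : ℤ) (i j r : ℕ) :
    γ ^ (f * (r : ℤ)) * (γ ^ (m * (r : ℤ))) ^ i * (γ ^ ((r : ℕ) : ℤ)) ^ j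
      = (γ ^ (f + (i : ℤ) * m + (j : ℤ))) ^ r := by
  rw [← zpow_natCast (γ ^ (m * (r : ℤ))), ← zpow_natCast (γ ^ ((r : ℕ) : ℤ)),
    ← zpow_natCast (γ ^ (f + (i : ℤ) * m + (j : ℤ))), ← zpow_mul, ← zpow_mul, ← zpow_mul,
    ← zpow_add, ← zpow_add]
  congr 1
  ring

/-- **Bound II, generator-polynomial form.**  If the generator polynomial `g` of a
repeated-root cyclic code `C` of length `n = p^s * n'` over `F` has `γ^{f+im+j}` as a
root of multiplicity at least `p^s` for all `i = 0, …, δ-2` and `j = 0, …, ν` (that is,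
`g` has `ν+1` shifted sequences of `δ-1` consecutive zeros of multiplicity `p^s`), then
the minimum Hamming distance of `C` is at least `δ + ν`. -/
theorem repeatedRoot_HT_bound_of_generator_roots
    {F K : Type*} [Field F] [Fintype F] [Field K] [Algebra F K]
    (p t s n' : ℕ) (hp : p.Prime) (hq : Fintype.card F = p ^ t) (ht : 0 < t)
    (hn'p : Nat.Coprime n' p)
    (g : F[X]) (hg_monic : g.Monic) (hg_dvd : g ∣ X ^ (p ^ s * n') - 1)
    (γ : Kˣ) (hγ : orderOf γ = n')
    (f m : ℤ) (hm : m ≠ 0) (hmn' : Int.gcd (n' : ℤ) m = 1)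
    (δ ν : ℕ) (hδ : 2 ≤ δ)
    (hroots : ∀ i < δ - 1, ∀ j ≤ ν, ∀ u < p ^ s,
      aeval ((γ ^ (f + (i : ℤ) * m + (j : ℤ)) : Kˣ) : K) (hasseDeriv u g) = 0) :
    ∀ c : F[X], c.degree < ((p ^ s * n' : ℕ) : WithBot ℕ) → g ∣ c → c ≠ 0 →
      δ + ν ≤ c.support.card := by
  classical
  intro c hcdeg hgc hc0
  have hn'pos : 0 < n' := by
    rcases Nat.eq_zero_or_pos n' with h | h
    · exfalso
      rw [h] at hn'p
      have : p = 1 := by simpa [Nat.Coprime] using hn'p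
      exact hp.one_lt.ne' this
    · exact h
  have hNpos : 0 < p ^ s := pow_pos hp.pos s
  have hγn' : γ ^ n' = 1 := by rw [← hγ]; exact pow_orderOf_eq_one γ
  have hcnd : c.natDegree < p ^ s * n' :=
    (natDegree_lt_iff_degree_lt hc0).mpr hcdeg
  -- folded syndrome coefficients
  set D : ℕ → ℕ → F := fun u r => ∑ l ∈ c.support.filter (fun l => l % n' = r),
      (l.choose u : F) * c.coeff l with hDdef
  -- master syndrome identity
  have synd : ∀ (β : Kˣ), β ^ n' = 1 → ∀ u : ℕ,
      (aeval (β : K) (hasseDeriv u c)) * (β : K) ^ u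
        = ∑ r ∈ Finset.range n', algebraMap F K (D u r) * (β : K) ^ r := by
    intro β hβ u
    have hβK : (β : K) ^ n' = 1 := by
      have := congrArg (Units.val) hβ; simpa using this
    have hpowmod : ∀ l : ℕ, (β : K) ^ l = (β : K) ^ (l % n') := by
      intro l
      conv_lhs => rw [← Nat.div_add_mod l n']
      rw [pow_add, pow_mul, hβK, one_pow, one_mul]
    have step1 : (aeval (β : K) (hasseDeriv u c)) * (β : K) ^ u
        = ∑ l ∈ c.support, algebraMap F K ((l.choose u : F) * c.coeff l)
            * (β : K) ^ (l % n') := by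
      rw [hasseDeriv_apply, Polynomial.sum_def, map_sum, Finset.sum_mul]
      refine Finset.sum_congr rfl fun l _ => ?_
      rw [aeval_monomial]
      rcases le_or_gt u l with h | h
      · rw [mul_assoc, ← pow_add, Nat.sub_add_cancel h, hpowmod l]
      · rw [Nat.choose_eq_zero_of_lt h]
        push_cast
        simp
    rw [step1, ← Finset.sum_fiberwise_of_maps_to
        (g := fun l => l % n') (t := Finset.range n')
        (fun l _ => Finset.mem_range.mpr (Nat.mod_lt l hn'pos)) _]
    refine Finset.sum_congr rfl fun r hr => ?_
    rw [hDdef, map_sum, Finset.sum_mul]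
    refine Finset.sum_congr rfl fun l hl => ?_
    rw [(Finset.mem_filter.mp hl).2]
  -- Hasse derivatives of c vanish on the pattern
  have hcroots : ∀ i < δ - 1, ∀ j ≤ ν, ∀ u < p ^ s,
      aeval ((γ ^ (f + (i : ℤ) * m + (j : ℤ)) : Kˣ) : K) (hasseDeriv u c) = 0 := by
    intro i hi j hj u hu
    obtain ⟨h, rfl⟩ := hgc
    rw [hasseDeriv_mul, map_sum]
    refine Finset.sum_eq_zero fun ij hij => ?_
    have hij1 : ij.1 ≤ u := by
      have := Finset.HasAntidiagonal.mem_antidiagonal.mp hij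
      omega
    rw [map_mul, hroots i hi j hj ij.1 (lt_of_le_of_lt hij1 hu), zero_mul]
  -- zpow power of γ is an n'-th root of unity
  have hrootone : ∀ e : ℤ, (γ ^ e) ^ n' = 1 := by
    intro e
    rw [← zpow_natCast (γ ^ e), ← zpow_mul, mul_comm, zpow_mul, zpow_natCast, hγn', one_zpow]
  -- pattern syndromes vanish
  have hpat : ∀ i < δ - 1, ∀ j ≤ ν, ∀ u < p ^ s,
      ∑ r ∈ Finset.range n', algebraMap F K (D u r)
        * ((γ ^ (f + (i : ℤ) * m + (j : ℤ)) : Kˣ) : K) ^ r = 0 := by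
    intro i hi j hj u hu
    rw [← synd _ (hrootone _) u, hcroots i hi j hj u hu, zero_mul]
  -- Step 2: some folded coefficient is nonzero
  have hex : ∃ u, u < p ^ s ∧ ∃ r, D u r ≠ 0 := by
    by_contra hall
    push_neg at hall
    apply hc0
    have hroots' : ∀ r' : ℕ, ∀ u < p ^ s, aeval ((γ ^ r' : Kˣ) : K) (hasseDeriv u c) = 0 := by
      intro r' u hu
      have h1 := synd (γ ^ r') (by rw [← pow_mul, mul_comm, pow_mul, hγn', one_pow]) u
      rw [Finset.sum_eq_zero (fun r _ => by rw [hall u hu r, map_zero, zero_mul])] at h1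
      exact (mul_eq_zero.mp h1).resolve_right (pow_ne_zero _ (Units.ne_zero _))
    set cK := c.map (algebraMap F K) with hcK
    have hdvd1 : ∀ r' ∈ Finset.range n', (X - C ((γ ^ r' : Kˣ) : K)) ^ (p ^ s) ∣ cK := by
      intro r' _
      set b : K := ((γ ^ r' : Kˣ) : K) with hb
      have htay : ∀ u < p ^ s, (Polynomial.taylor b cK).coeff u = 0 := by
        intro u hu
        rw [taylor_coeff, hcK, hasseDeriv_map', eval_map]
        exact hroots' r' u hu
      obtain ⟨q, hq⟩ := Polynomial.X_pow_dvd_iff.mpr htay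
      have hcomp : (Polynomial.taylor b cK).comp (X - C b) = cK := by
        rw [taylor_apply, comp_assoc, add_comp, X_comp, C_comp, sub_add_cancel, comp_X]
      rw [← hcomp, hq, mul_comp, pow_comp, X_comp]
      exact Dvd.intro _ rfl
    have hprod : (∏ r' ∈ Finset.range n', (X - C ((γ ^ r' : Kˣ) : K)) ^ (p ^ s)) ∣ cK := by
      refine Finset.prod_dvd_of_coprime ?_ hdvd1
      intro a ha b hb hab
      refine IsCoprime.pow ?_
      refine isCoprime_X_sub_C_of_isUnit_sub ?_
      have hne : ((γ ^ a : Kˣ) : K) ≠ ((γ ^ b : Kˣ) : K) := by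
        intro h
        apply hab
        have := Units.ext h
        exact pow_injOn_Iio_orderOf (by simpa [hγ] using Finset.mem_range.mp ha)
          (by simpa [hγ] using Finset.mem_range.mp hb) this
      exact (sub_ne_zero.mpr hne).isUnit
    have hcK0 : cK = 0 := by
      by_contra h
      have hdl := Polynomial.natDegree_le_of_dvd hprod h
      rw [Polynomial.natDegree_prod_of_monic _ _
          (fun i _ => (monic_X_sub_C _).pow (p ^ s))] at hdl
      simp only [natDegree_pow, natDegree_X_sub_C, mul_one, Finset.sum_const,
        Finset.card_range, smul_eq_mul, Nat.mul_comm n' (p ^ s)] at hdl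
      have hdc : cK.natDegree = c.natDegree := natDegree_map_eq_of_injective
        (algebraMap F K).injective c
      omega
    exact (Polynomial.map_eq_zero_iff (algebraMap F K).injective).mp hcK0
  obtain ⟨u0, hu0, r1, hr1⟩ := hex
  -- Step 3: set up the support of the folded word
  set T : Finset ℕ := (Finset.range n').filter (fun r => D u0 r ≠ 0) with hT
  have hr1n' : r1 ∈ Finset.range n' := by
    by_contra h
    apply hr1
    have hempty : c.support.filter (fun l => l % n' = r1) = ∅ := by
      refine Finset.filter_eq_empty_iff.mpr fun l _ => ?_
      intro heq
      exact h (Finset.mem_range.mpr (heq ▸ Nat.mod_lt _ hn'pos))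
    rw [hDdef]
    simp only [hempty, Finset.sum_empty]
  have hTne : T.Nonempty := ⟨r1, Finset.mem_filter.mpr ⟨hr1n', hr1⟩⟩
  have hTcard : T.card ≤ c.support.card := by
    calc T.card ≤ (c.support.image (· % n')).card := by
          refine Finset.card_le_card fun r hr => ?_
          obtain ⟨hrng, hDr⟩ := Finset.mem_filter.mp hr
          obtain ⟨l, hl, hlne⟩ := Finset.exists_ne_zero_of_sum_ne_zero hDr
          obtain ⟨hlS, hlr⟩ := Finset.mem_filter.mp hl
          exact Finset.mem_image.mpr ⟨l, hlS, hlr⟩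
      _ ≤ c.support.card := Finset.card_image_le
  -- restricted pattern sums over T
  have hTsub : T ⊆ Finset.range n' := Finset.filter_subset _ _
  have hpatT : ∀ i < δ - 1, ∀ j ≤ ν,
      ∑ r ∈ T, algebraMap F K (D u0 r)
        * ((γ ^ (f + (i : ℤ) * m + (j : ℤ)) : Kˣ) : K) ^ r = 0 := by
    intro i hi j hj
    rw [← hpat i hi j hj u0 hu0]
    refine (Finset.sum_subset hTsub fun r hrng hrT => ?_).symm.symm
    have : D u0 r = 0 := by
      by_contra hne
      exact hrT (Finset.mem_filter.mpr ⟨hrng, hne⟩)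
    rw [this, map_zero, zero_mul]
  -- apply the AB bound over the subtype of T
  have hmemlt : ∀ r : {x // x ∈ T}, (r : ℕ) < n' := fun r =>
    Finset.mem_range.mp (hTsub r.2)
  haveI : Nonempty {x // x ∈ T} := Finset.Nonempty.coe_sort hTne
  have hmain := ab_core (K := K) (ι := {x // x ∈ T})
    (fun r => ((γ ^ (f * ((r : ℕ) : ℤ)) : Kˣ) : K))
    (fun r => algebraMap F K (D u0 (r : ℕ)))
    (fun r => ((γ ^ (m * ((r : ℕ) : ℤ)) : Kˣ) : K))
    (fun r => ((γ ^ (((r : ℕ) : ℕ) : ℤ) : Kˣ) : K))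
    (fun r => Units.ne_zero _)
    (fun r => by
      have := (Finset.mem_filter.mp r.2).2
      simpa using (map_ne_zero (algebraMap F K)).mpr this)
    (fun r r' h => by
      have h2 : (γ ^ (m * ((r : ℕ) : ℤ)) : Kˣ) = γ ^ (m * (((r' : ℕ)) : ℤ)) := Units.ext h
      exact Subtype.ext (pow_inj_of_gcd_one n' γ hγ m hmn' _ _ (hmemlt r) (hmemlt r') h2))
    (fun r r' h => by
      have h2 : (γ ^ (((r : ℕ) : ℕ) : ℤ) : Kˣ) = γ ^ ((((r' : ℕ) : ℕ)) : ℤ) := Units.ext h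
      have h3 : γ ^ ((1 : ℤ) * ((r : ℕ) : ℤ)) = γ ^ ((1 : ℤ) * ((r' : ℕ) : ℤ)) := by
        simpa [one_mul] using h2
      exact Subtype.ext (pow_inj_of_gcd_one n' γ hγ 1 (by simp) _ _
        (hmemlt r) (hmemlt r') h3))
    (δ - 1) (ν + 1) (by omega) (by omega)
    (by
      intro i hi j hj
      have hj' : j ≤ ν := by omega
      have key := hpatT i hi j hj'
      rw [← Finset.sum_coe_sort T] at key
      rw [← key]
      refine Finset.sum_congr rfl fun r _ => ?_
      have harith := unit_pow_arith γ f m i j (r : ℕ)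
      calc ((γ ^ (f * ((r : ℕ) : ℤ)) : Kˣ) : K) * ((γ ^ (m * ((r : ℕ) : ℤ)) : Kˣ) : K) ^ i
              * (algebraMap F K (D u0 (r : ℕ))
                * ((γ ^ (((r : ℕ) : ℕ) : ℤ) : Kˣ) : K) ^ j)
          = algebraMap F K (D u0 (r : ℕ))
              * (((γ ^ (f * ((r : ℕ) : ℤ)) : Kˣ) : K)
                * ((γ ^ (m * ((r : ℕ) : ℤ)) : Kˣ) : K) ^ i
                * ((γ ^ (((r : ℕ) : ℕ) : ℤ) : Kˣ) : K) ^ j) := by ring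
        _ = algebraMap F K (D u0 (r : ℕ))
              * ((γ ^ (f + (i : ℤ) * m + (j : ℤ)) : Kˣ) : K) ^ (r : ℕ) := by
            simp only [← Units.val_pow_eq_pow_val, ← Units.val_mul, harith])
  have hcardT' : Fintype.card {x // x ∈ T} = T.card := Fintype.card_coe T
  rw [hcardT'] at hmain
  omega
end

section
/- Let C be an [n = p^s·n', k = p^s·k', d] repeated-root cyclic code over F_q (q a power of the prime p, gcd(n',p) = 1) whose generator polynomial has the form g(X)^{p^s}, where g ∈ F_q[X] is the generator polynomial of a simple-root cyclic code of length n' over F_q with defining set D^F ⊆ {0,…,n'−1} of size n' − k' (so every root γ^i, i ∈ D^F, of g occurs in the generator of C with multiplicity exactly p^s). Then the folded code C^F is a linear cyclic code over F_{q^{p^s}} of length n', dimension k', and the same minimum Hamming distance d. Moreover, if the set D^F is invariant under multiplication by p^s modulo n' (which holds in particular when q = p), then C^F is a simple-root cyclic code with defining set D^F, i.e., its generator polynomial has exactly the simple roots γ^i for i ∈ D^F. -/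
/-!
Write `ps = p^s`. In characteristic `p`, `g ^ ps = ĝ(X ^ ps)`, where `ĝ` is `g` with its
coefficients raised to the power `ps`. Splitting a word as `c = Σ_{u < ps} X^u c_u(X^ps)` into its
polyphase components, `ĝ(X ^ ps)` divides `c` iff `ĝ` divides every `c_u`, and `deg c < ps n'` iff
every `deg c_u < n'`: the code `C` is the `ps`-fold interleaving of the cyclic code of length `n'`
generated by `ĝ`. Folding sends `c` to `Σ_u ζ^u c_u`, so, since the `ζ^u` are a basis of `L`
over `F`, the folded code is exactly the code of length `n'` generated by `ĝ` over `L`; it has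
dimension `n' - deg ĝ = k'` and inherits cyclicity from `ĝ ∣ X^n' - 1`.

Every nonzero coordinate of a folded word comes from a nonzero coefficient of the word, so
folding does not increase weights; conversely, for a component `c_u ≠ 0` of `c ∈ C`,
`X^u c_u(X^ps)` is a nonzero codeword of `C` whose weight is at most that of the fold of `c`.
Hence the minimum distance is preserved. Finally the roots of `ĝ` are the `γ^(ps i)`, `i ∈ D^F`,
and multiplication by `ps` permutes `D^F` when it maps `D^F` into itself, because `ps` is a unit
modulo `n'`.
-/

open Polynomial

/-- Folding of a length-`p^s * n'` word (given as a polynomial `c` over `F`) into a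
length-`n'` word over the extension `L` of degree `p^s`, using the basis element `ζ`:
block `j` of `c` is mapped to the coefficient `Σ_{u < p^s} c_{u + j p^s} ζ^u` of `X^j`. -/
noncomputable def foldPoly (F L : Type*) [Field F] [Field L] [Algebra F L]
    (ζ : L) (ps n' : ℕ) (c : Polynomial F) : Polynomial L :=
  ∑ j ∈ Finset.range n',
    Polynomial.C (∑ u ∈ Finset.range ps, algebraMap F L (c.coeff (u + j * ps)) * ζ ^ u) *
      Polynomial.X ^ j

open Finset

section PolynomialCode

variable {R : Type*} [Semiring R]

def polynomialCode (G : R[X]) (n : ℕ) : Set R[X] :=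
  {f | f.degree < n ∧ G ∣ f}

def nonzeroWeights (C : Set R[X]) : Set ℕ :=
  {w | ∃ c ∈ C, c ≠ 0 ∧ w = #c.support}

variable {K : Type*} [Field K] {G f₁ f₂ : K[X]} {n : ℕ}

theorem add_mem_polynomialCode (h₁ : f₁ ∈ polynomialCode G n)
    (h₂ : f₂ ∈ polynomialCode G n) :
    f₁ + f₂ ∈ polynomialCode G n :=
  ⟨(degree_add_le _ _).trans_lt (max_lt h₁.1 h₂.1), dvd_add h₁.2 h₂.2⟩

theorem smul_mem_polynomialCode (a : K) (h : f₁ ∈ polynomialCode G n) :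
    a • f₁ ∈ polynomialCode G n :=
  ⟨(degree_smul_le a f₁).trans_lt h.1, (smul_eq_C_mul a ▸ dvd_mul_of_dvd_right h.2 _ :)⟩

theorem X_mul_modByMonic_mem_polynomialCode (hn : 0 < n) (hG : G ∣ X ^ n - 1)
    (h : f₁ ∈ polynomialCode G n) : (X * f₁) %ₘ (X ^ n - 1) ∈ polynomialCode G n := by
  have hmonic : (X ^ n - 1 : K[X]).Monic := by simpa using monic_X_pow_sub_C (1 : K) hn.ne'
  refine ⟨?_, ?_⟩
  · have hdeg : (X ^ n - 1 : K[X]).degree = n := by simpa using degree_X_pow_sub_C hn (1 : K)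
    exact hdeg ▸ degree_modByMonic_lt (X * f₁) hmonic
  · rw [modByMonic_eq_sub_mul_div]
    exact dvd_sub (dvd_mul_of_dvd_right h.2 X) (dvd_mul_of_dvd_left hG _)

theorem Polynomial.degree_mul_lt_iff (hG : G ≠ 0) (b : K[X]) :
    (G * b).degree < n ↔ b.degree < ↑(n - G.natDegree) := by
  rcases eq_or_ne b 0 with rfl | hb
  · simp
  rw [degree_mul, degree_eq_natDegree hG, degree_eq_natDegree hb]
  norm_cast
  omega

theorem natCard_polynomialCode [Fintype K] (hG : G ≠ 0) :
    Nat.card (polynomialCode G n) = Fintype.card K ^ (n - G.natDegree) := by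
  have himage : polynomialCode G n = (G * ·) '' {b | b.degree < ↑(n - G.natDegree)} := by
    ext f
    constructor
    · rintro ⟨hf, b, rfl⟩
      exact ⟨b, (degree_mul_lt_iff hG b).1 hf, rfl⟩
    · rintro ⟨b, hb, rfl⟩
      exact ⟨(degree_mul_lt_iff hG b).2 hb, dvd_mul_right _ _⟩
  rw [himage, Nat.card_image_of_injective (mul_right_injective₀ hG)]
  have e : {b : K[X] | b.degree < ↑(n - G.natDegree)} ≃ (Fin (n - G.natDegree) → K) :=
    (Equiv.subtypeEquivRight fun _ => mem_degreeLT.symm).trans (degreeLTEquiv K _).toEquiv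
  rw [Nat.card_congr e, Nat.card_eq_fintype_card, Fintype.card_fun, Fintype.card_fin]

end PolynomialCode

namespace Polynomial

section Polyphase

variable {R : Type*} [CommSemiring R] {ps : ℕ}

theorem coeff_iterate_divX (q : R[X]) (u n : ℕ) : (divX^[u] q).coeff n = q.coeff (n + u) := by
  induction u generalizing n with
  | zero => rfl
  | succ u ih => rw [Function.iterate_succ_apply', coeff_divX, ih, add_right_comm, add_assoc]

noncomputable def polyphase (ps u : ℕ) (q : R[X]) : R[X] :=
  contract ps (divX^[u] q)

theorem coeff_polyphase (hps : ps ≠ 0) (u : ℕ) (q : R[X]) (j : ℕ) :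
    (polyphase ps u q).coeff j = q.coeff (u + j * ps) := by
  rw [polyphase, coeff_contract hps, coeff_iterate_divX, add_comm]

@[simp]
theorem polyphase_zero (ps u : ℕ) : polyphase ps u (0 : R[X]) = 0 := by
  simp [polyphase, Function.iterate_fixed divX_zero, contract]

noncomputable def ofPolyphase (ps : ℕ) (r : Fin ps → R[X]) : R[X] :=
  ∑ u : Fin ps, X ^ (u : ℕ) * expand R ps (r u)

theorem coeff_ofPolyphase (hps : 0 < ps) (r : Fin ps → R[X]) (N : ℕ) :
    (ofPolyphase ps r).coeff N = (r ⟨N % ps, Nat.mod_lt N hps⟩).coeff (N / ps) := by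
  have hN : N - N % ps = N / ps * ps := by have := Nat.mod_add_div' N ps; omega
  rw [ofPolyphase, finsetSum_coeff, Finset.sum_eq_single ⟨N % ps, Nat.mod_lt N hps⟩]
  · rw [coeff_X_pow_mul', if_pos (Nat.mod_le N ps), hN, coeff_expand_mul hps]
  · intro u _ hu
    rw [coeff_X_pow_mul']
    split_ifs with hle
    · rw [coeff_expand hps, if_neg]
      intro hdvd
      refine hu (Fin.ext ?_)
      rw [← Nat.mod_eq_of_lt u.2]
      exact (Nat.modEq_iff_dvd' hle).2 hdvd
    · rfl
  · exact fun h => absurd (Finset.mem_univ _) h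

theorem polyphase_ofPolyphase (r : Fin ps → R[X]) (u : Fin ps) :
    polyphase ps u (ofPolyphase ps r) = r u := by
  ext j
  have hmod : ((u : ℕ) + j * ps) % ps = u := by
    rw [Nat.add_mul_mod_self_right, Nat.mod_eq_of_lt u.2]
  have hdiv : ((u : ℕ) + j * ps) / ps = j := by
    rw [Nat.add_mul_div_right _ _ u.pos, Nat.div_eq_of_lt u.2, zero_add]
  rw [coeff_polyphase u.pos.ne', coeff_ofPolyphase u.pos, hdiv]
  congr 2
  exact Fin.ext hmod

theorem ofPolyphase_polyphase (hps : 0 < ps) (q : R[X]) :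
    ofPolyphase ps (fun u => polyphase ps u q) = q := by
  ext N
  rw [coeff_ofPolyphase hps, coeff_polyphase hps.ne', Nat.mod_add_div']

theorem expand_mul_ofPolyphase (e : R[X]) (r : Fin ps → R[X]) :
    expand R ps e * ofPolyphase ps r = ofPolyphase ps fun u => e * r u := by
  simp only [ofPolyphase, Finset.mul_sum, map_mul]
  exact Finset.sum_congr rfl fun u _ => by ring

theorem polyphase_expand_mul (e q : R[X]) (u : Fin ps) :
    polyphase ps u (expand R ps e * q) = e * polyphase ps u q := by
  conv_lhs => rw [← ofPolyphase_polyphase u.pos q, expand_mul_ofPolyphase]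
  exact polyphase_ofPolyphase _ u

theorem degree_lt_mul_iff_polyphase (hps : 0 < ps) (q : R[X]) (n : ℕ) :
    q.degree < ↑(ps * n) ↔ ∀ u : Fin ps, (polyphase ps u q).degree < n := by
  simp only [degree_lt_iff_coeff_zero, coeff_polyphase hps.ne']
  refine ⟨fun h u j hj => h _ ?_, fun h N hN => ?_⟩
  · nlinarith
  · rw [← Nat.mod_add_div' N ps]
    exact h ⟨N % ps, Nat.mod_lt N hps⟩ _ ((Nat.le_div_iff_mul_le hps).2 (by linarith))

theorem mem_polynomialCode_expand_iff (hps : 0 < ps) (e q : R[X]) (n : ℕ) :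
    q ∈ polynomialCode (expand R ps e) (ps * n) ↔
      ∀ u : Fin ps, polyphase ps u q ∈ polynomialCode e n := by
  simp only [polynomialCode, Set.mem_ofPred_eq]
  rw [degree_lt_mul_iff_polyphase hps, forall_and]
  refine and_congr_right fun _ => ⟨?_, fun h => ?_⟩
  · rintro ⟨q', rfl⟩ u
    rw [polyphase_expand_mul]
    exact dvd_mul_right _ _
  · choose r hr using h
    rw [← ofPolyphase_polyphase hps q, _root_.funext hr, ← expand_mul_ofPolyphase]
    exact dvd_mul_right _ _

theorem card_support_ofPolyphase_single_le (u : Fin ps) (r : R[X]) :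
    #(ofPolyphase ps (Pi.single u r)).support ≤ #r.support := by
  refine (card_le_card fun N hN => ?_).trans (card_image_le (f := (u + · * ps)))
  rw [mem_support_iff, coeff_ofPolyphase u.pos] at hN
  by_cases hu : (⟨N % ps, Nat.mod_lt N u.pos⟩ : Fin ps) = u
  · rw [← hu, Pi.single_eq_same] at hN
    exact mem_image.2 ⟨N / ps, mem_support_iff.2 hN, by rw [← hu, Nat.mod_add_div']⟩
  · rw [Pi.single_eq_of_ne hu, coeff_zero] at hN
    exact absurd rfl hN

end Polyphase

section BasisSum

variable {F L ι : Type*} [Field F] [Field L] [Algebra F L] {b : Module.Basis ι F L}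

variable (b) in
noncomputable def basisCoord (i : ι) (f : L[X]) : F[X] :=
  ∑ j ∈ f.support, monomial j (b.repr (f.coeff j) i)

theorem coeff_basisCoord (i : ι) (f : L[X]) (j : ℕ) :
    (basisCoord b i f).coeff j = b.repr (f.coeff j) i := by
  simp only [basisCoord, finsetSum_coeff, coeff_monomial, Finset.sum_ite_eq']
  split_ifs with h
  · rfl
  · rw [notMem_support_iff.1 h, map_zero, Finsupp.zero_apply]

theorem degree_basisCoord_le (i : ι) (f : L[X]) : (basisCoord b i f).degree ≤ f.degree := by
  refine degree_le_iff_coeff_zero _ _ |>.2 fun m hm => ?_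
  rw [coeff_basisCoord, coeff_eq_zero_of_degree_lt hm, map_zero, Finsupp.zero_apply]

variable [Fintype ι]

variable (b) in
noncomputable def basisSum (r : ι → F[X]) : L[X] :=
  ∑ i, (r i).map (algebraMap F L) * C (b i)

theorem coeff_basisSum (r : ι → F[X]) (j : ℕ) :
    (basisSum b r).coeff j = ∑ i, (r i).coeff j • b i := by
  simp only [basisSum, finsetSum_coeff, coeff_mul_C, coeff_map, Algebra.smul_def]

theorem coeff_basisSum_eq_zero_iff {r : ι → F[X]} {j : ℕ} :
    (basisSum b r).coeff j = 0 ↔ ∀ i, (r i).coeff j = 0 := by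
  rw [coeff_basisSum]
  exact ⟨Fintype.linearIndependent_iff.1 b.linearIndependent _, fun h => by simp [h]⟩

theorem support_subset_support_basisSum (r : ι → F[X]) (i : ι) :
    (r i).support ⊆ (basisSum b r).support := fun _ hj =>
  mem_support_iff.2 fun h => mem_support_iff.1 hj (coeff_basisSum_eq_zero_iff.1 h i)

theorem basisSum_eq_zero_iff {r : ι → F[X]} : basisSum b r = 0 ↔ ∀ i, r i = 0 :=
  ⟨fun h i => ext fun j => coeff_basisSum_eq_zero_iff.1 (by rw [h, coeff_zero]) i,
    fun h => by simp [basisSum, h]⟩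

theorem basisSum_mul (e : F[X]) (r : ι → F[X]) :
    basisSum b (fun i => e * r i) = e.map (algebraMap F L) * basisSum b r := by
  simp only [basisSum, Polynomial.map_mul, Finset.mul_sum, mul_assoc]

theorem basisSum_basisCoord (f : L[X]) : basisSum b (fun i => basisCoord b i f) = f := by
  ext j
  simp only [coeff_basisSum, coeff_basisCoord, b.sum_repr]

end BasisSum

end Polynomial

section Folding

variable {F L : Type*} [Field F] [Field L] [Algebra F L]

def foldedCode (ζ : L) (ps n : ℕ) (G : F[X]) : Set L[X] :=
  {cf | ∃ c : F[X], c.degree < ↑(ps * n) ∧ G ∣ c ∧ cf = foldPoly F L ζ ps n c}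

variable {ps n : ℕ}

theorem coeff_foldPoly (ζ : L) (c : F[X]) (j : ℕ) :
    (foldPoly F L ζ ps n c).coeff j =
      if j < n then ∑ u ∈ range ps, algebraMap F L (c.coeff (u + j * ps)) * ζ ^ u else 0 := by
  simp only [foldPoly, finsetSum_coeff, coeff_C_mul, coeff_X_pow, mul_ite, mul_one, mul_zero,
    Finset.sum_ite_eq, Finset.mem_range]

theorem degree_foldPoly_lt (ζ : L) (c : F[X]) : (foldPoly F L ζ ps n c).degree < n :=
  degree_lt_iff_coeff_zero _ _ |>.2 fun j hj => by
    rw [coeff_foldPoly, if_neg (by exact_mod_cast hj.not_gt)]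

theorem support_foldPoly_subset (ζ : L) (c : F[X]) :
    (foldPoly F L ζ ps n c).support ⊆ c.support.image (· / ps) := by
  intro j hj
  rw [mem_support_iff, coeff_foldPoly] at hj
  split_ifs at hj
  · obtain ⟨u, hu, hne⟩ := Finset.exists_ne_zero_of_sum_ne_zero hj
    have hc : c.coeff (u + j * ps) ≠ 0 := fun h => hne (by rw [h, map_zero, zero_mul])
    rw [Finset.mem_range] at hu
    refine mem_image.2 ⟨_, mem_support_iff.2 hc, ?_⟩
    rw [Nat.add_mul_div_right _ _ (by omega), Nat.div_eq_of_lt hu, zero_add]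
  · exact absurd rfl hj

theorem card_support_foldPoly_le (ζ : L) (c : F[X]) :
    #(foldPoly F L ζ ps n c).support ≤ #c.support :=
  (card_le_card (support_foldPoly_subset ζ c)).trans card_image_le

variable {ζ : L} {bζ : Module.Basis (Fin ps) F L}

theorem foldPoly_eq_basisSum_polyphase (hbζ : ∀ u : Fin ps, bζ u = ζ ^ (u : ℕ)) {c : F[X]}
    (hc : c.degree < ↑(ps * n)) :
    foldPoly F L ζ ps n c = basisSum bζ fun u => polyphase ps u c := by
  ext j
  rw [coeff_foldPoly, coeff_basisSum, ← Fin.sum_univ_eq_sum_range]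
  split_ifs with hj
  · refine Finset.sum_congr rfl fun u _ => ?_
    rw [coeff_polyphase u.pos.ne', hbζ, Algebra.smul_def]
  · refine (Finset.sum_eq_zero fun u _ => ?_).symm
    rw [coeff_polyphase u.pos.ne', coeff_eq_zero_of_degree_lt, zero_smul]
    exact hc.trans_le (by exact_mod_cast (by nlinarith : ps * n ≤ u + j * ps))

theorem foldPoly_ne_zero (hbζ : ∀ u : Fin ps, bζ u = ζ ^ (u : ℕ)) {c : F[X]}
    (hc : c.degree < ↑(ps * n)) (hc0 : c ≠ 0) : foldPoly F L ζ ps n c ≠ 0 := by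
  rw [foldPoly_eq_basisSum_polyphase hbζ hc, Ne, basisSum_eq_zero_iff]
  intro h
  apply hc0
  rw [← ofPolyphase_polyphase (Fin.pos_iff_nonempty.2 bζ.index_nonempty) c]
  simp [h, ofPolyphase]

theorem foldedCode_expand (hbζ : ∀ u : Fin ps, bζ u = ζ ^ (u : ℕ)) (e : F[X]) :
    foldedCode ζ ps n (expand F ps e) = polynomialCode (e.map (algebraMap F L)) n := by
  have hps : 0 < ps := Fin.pos_iff_nonempty.2 bζ.index_nonempty
  ext cf
  constructor
  · rintro ⟨c, hc, hdvd, rfl⟩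
    refine ⟨degree_foldPoly_lt ζ c, ?_⟩
    choose q hq using fun u => ((mem_polynomialCode_expand_iff hps e c n).1 ⟨hc, hdvd⟩ u).2
    rw [foldPoly_eq_basisSum_polyphase hbζ hc, _root_.funext hq, basisSum_mul]
    exact dvd_mul_right _ _
  · rintro ⟨hcf, b, rfl⟩
    set r : Fin ps → F[X] := fun u => e * basisCoord bζ u b
    have hr : ∀ u, (r u).degree < n := fun u =>
      calc (r u).degree = e.degree + (basisCoord bζ u b).degree := degree_mul
        _ ≤ e.degree + b.degree := by gcongr; exact degree_basisCoord_le u b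
        _ = (e.map (algebraMap F L) * b).degree := by rw [degree_mul, degree_map]
        _ < n := hcf
    obtain ⟨hc, hdvd⟩ :=
      (mem_polynomialCode_expand_iff hps e (ofPolyphase ps r) n).2 fun u => by
        rw [polyphase_ofPolyphase]
        exact ⟨hr u, dvd_mul_right _ _⟩
    refine ⟨ofPolyphase ps r, hc, hdvd, ?_⟩
    rw [foldPoly_eq_basisSum_polyphase hbζ hc]
    simp only [polyphase_ofPolyphase, r, basisSum_mul, basisSum_basisCoord]

theorem exists_card_support_le_foldPoly (hbζ : ∀ u : Fin ps, bζ u = ζ ^ (u : ℕ)) {e c : F[X]}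
    (hc : c ∈ polynomialCode (expand F ps e) (ps * n)) (hfold : foldPoly F L ζ ps n c ≠ 0) :
    ∃ c' ∈ polynomialCode (expand F ps e) (ps * n), c' ≠ 0 ∧
      #c'.support ≤ #(foldPoly F L ζ ps n c).support := by
  have hps : 0 < ps := Fin.pos_iff_nonempty.2 bζ.index_nonempty
  rw [foldPoly_eq_basisSum_polyphase hbζ hc.1] at hfold ⊢
  obtain ⟨u, hu⟩ : ∃ u : Fin ps, polyphase ps u c ≠ 0 := by
    simpa [basisSum_eq_zero_iff] using hfold
  have hcomponents := (mem_polynomialCode_expand_iff hps e c n).1 hc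
  set c' := ofPolyphase ps (Pi.single u (polyphase ps u c))
  have hc' : c' ∈ polynomialCode (expand F ps e) (ps * n) :=
    (mem_polynomialCode_expand_iff hps e c' n).2 fun v => by
      rw [polyphase_ofPolyphase]
      rcases eq_or_ne v u with rfl | hv
      · simpa using hcomponents v
      · simp [Pi.single_eq_of_ne hv, polynomialCode]
  have hweight : #c'.support ≤ #(polyphase ps u c).support :=
    card_support_ofPolyphase_single_le u _
  have hsupport := support_subset_support_basisSum (b := bζ) (polyphase ps · c) u
  refine ⟨c', hc', fun h => hu ?_, hweight.trans (card_le_card hsupport)⟩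
  have h' := congrArg (polyphase ps u) h
  rwa [polyphase_ofPolyphase, Pi.single_eq_same, polyphase_zero] at h'

theorem isLeast_nonzeroWeights_foldedCode (hbζ : ∀ u : Fin ps, bζ u = ζ ^ (u : ℕ)) (e : F[X])
    {d : ℕ} (hd : IsLeast (nonzeroWeights (polynomialCode (expand F ps e) (ps * n))) d) :
    IsLeast (nonzeroWeights (foldedCode ζ ps n (expand F ps e))) d := by
  have hlower : d ∈ lowerBounds (nonzeroWeights (foldedCode ζ ps n (expand F ps e))) := by
    rintro w ⟨_, ⟨c, hc, hdvd, rfl⟩, hne, rfl⟩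
    obtain ⟨c', hc', hc0', hle⟩ := exists_card_support_le_foldPoly hbζ ⟨hc, hdvd⟩ hne
    exact (hd.2 ⟨c', hc', hc0', rfl⟩).trans hle
  obtain ⟨c, ⟨hc, hdvd⟩, hc0, rfl⟩ := hd.1
  have hne := foldPoly_ne_zero hbζ hc hc0
  have hmem : foldPoly F L ζ ps n c ∈ foldedCode ζ ps n (expand F ps e) := ⟨c, hc, hdvd, rfl⟩
  exact ⟨⟨_, hmem, hne,
    le_antisymm (hlower ⟨_, hmem, hne, rfl⟩) (card_support_foldPoly_le ζ c)⟩, hlower⟩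

end Folding

theorem prod_X_sub_C_pow_dvd_X_pow_sub_one {Ω : Type*} [CommRing Ω] [IsDomain Ω] {ζ : Ω}
    {n : ℕ} (hζ : IsPrimitiveRoot ζ n) {s : Finset ℕ} (hs : ∀ i ∈ s, i < n) :
    ∏ i ∈ s, (X - C (ζ ^ i)) ∣ X ^ n - 1 := by
  classical
  rcases Nat.eq_zero_or_pos n with rfl | hn
  · simp
  have hinj : Set.InjOn (ζ ^ ·) s := fun i hi j hj h => hζ.pow_inj (hs i hi) (hs j hj) h
  rw [X_pow_sub_one_eq_prod hn hζ, ← prod_image (f := fun x => X - C x) hinj]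
  refine prod_dvd_prod_of_subset _ _ _ (image_subset_iff.2 fun i _ => ?_)
  rw [mem_nthRootsFinset hn, ← pow_mul, mul_comm, pow_mul, hζ.pow_eq_one, one_pow]

theorem dvd_X_pow_sub_one_of_map_eq_prod {F Ω : Type*} [Field F] [CommRing Ω] [IsDomain Ω]
    (f : F →+* Ω) {g : F[X]} (hg : g.Monic) {γ : Ωˣ} {n : ℕ} (hγ : orderOf γ = n)
    {s : Finset ℕ} (hs : ∀ i ∈ s, i < n)
    (hroots : g.map f = ∏ i ∈ s, (X - C ((γ ^ i : Ωˣ) : Ω))) :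
    g ∣ X ^ n - 1 := by
  have hγ' : IsPrimitiveRoot (γ : Ω) n := by
    rw [← hγ, ← orderOf_units]
    exact IsPrimitiveRoot.orderOf _
  refine (map_dvd_map f f.injective hg).1 ?_
  simpa [hroots] using prod_X_sub_C_pow_dvd_X_pow_sub_one hγ' hs

theorem prod_comp_pow_mul_eq {G M : Type*} [Monoid G] [CommMonoid M] {γ : G} {n m : ℕ}
    (hγ : orderOf γ = n) (hm : n.Coprime m) {s : Finset ℕ} (hs : ∀ i ∈ s, i < n)
    (hinv : ∀ i ∈ s, m * i % n ∈ s) (f : G → M) :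
    ∏ i ∈ s, f (γ ^ (m * i)) = ∏ i ∈ s, f (γ ^ i) := by
  have hinj : Set.InjOn (fun i => m * i % n) s := fun i hi j hj h =>
    (Nat.ModEq.cancel_left_of_coprime hm h).eq_of_lt_of_lt (hs i hi) (hs j hj)
  have himage : s.image (fun i => m * i % n) = s :=
    Finset.eq_of_subset_of_card_le (Finset.image_subset_iff.2 hinv) (card_image_of_injOn hinj).ge
  conv_rhs => rw [← himage, prod_image hinj]
  simp_rw [← hγ, pow_mod_orderOf]

theorem map_map_iterateFrobenius_eq_prod {R S ι : Type*} [CommRing R] [CommRing S] {p : ℕ}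
    [ExpChar R p] [ExpChar S p] (f : R →+* S) {g : R[X]} {s : Finset ι} {a : ι → S}
    (hg : g.map f = ∏ i ∈ s, (X - C (a i))) (n : ℕ) :
    (g.map (iterateFrobenius R p n)).map f = ∏ i ∈ s, (X - C (a i ^ p ^ n)) := by
  rw [Polynomial.map_map, RingHom.iterateFrobenius_comm, ← Polynomial.map_map, hg,
    Polynomial.map_prod]
  simp [iterateFrobenius_def]

theorem folded_repeatedRoot_cyclic_code_general
    {F L Ω : Type*} [Field F] [Fintype F] [Field L] [Fintype L] [Field Ω]
    [Algebra F L] [Algebra F Ω] [Algebra L Ω] [IsScalarTower F L Ω]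
    (p t s n' k' d : ℕ) (hp : p.Prime) (hqF : Fintype.card F = p ^ t)
    (hn'p : Nat.Coprime n' p) (hk' : k' ≤ n')
    (ζ : L) (bζ : Module.Basis (Fin (p ^ s)) F L) (hbζ : ∀ u : Fin (p ^ s), bζ u = ζ ^ (u : ℕ))
    (γ : Ωˣ) (hγ : orderOf γ = n')
    (g : F[X]) (hg_monic : g.Monic)
    (DF : Finset ℕ) (hDF_sub : ∀ i ∈ DF, i < n') (hDF_card : DF.card = n' - k')
    (hg_roots : g.map (algebraMap F Ω) = ∏ i ∈ DF, (X - C ((γ ^ i : Ωˣ) : Ω)))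
    (hd : IsLeast {w | ∃ c : F[X],
        c.degree < ((p ^ s * n' : ℕ) : WithBot ℕ) ∧ g ^ p ^ s ∣ c ∧ c ≠ 0 ∧
          w = c.support.card} d) :
    letI CF : Set (Polynomial L) := {cf | ∃ c : F[X],
      c.degree < ((p ^ s * n' : ℕ) : WithBot ℕ) ∧ g ^ p ^ s ∣ c ∧
        cf = foldPoly F L ζ (p ^ s) n' c}
    (∀ cf ∈ CF, cf.degree < (n' : WithBot ℕ)) ∧
    (∀ cf₁ ∈ CF, ∀ cf₂ ∈ CF, cf₁ + cf₂ ∈ CF) ∧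
    (∀ a : L, ∀ cf ∈ CF, a • cf ∈ CF) ∧
    (∀ cf ∈ CF, (X * cf) %ₘ (X ^ n' - 1) ∈ CF) ∧
    Nat.card CF = Fintype.card L ^ k' ∧
    IsLeast {w | ∃ cf ∈ CF, cf ≠ 0 ∧ w = cf.support.card} d ∧
    ((∀ i ∈ DF, (p ^ s * i) % n' ∈ DF) →
      ∃ gF : Polynomial L, gF.Monic ∧
        gF.map (algebraMap L Ω) = ∏ i ∈ DF, (X - C ((γ ^ i : Ωˣ) : Ω)) ∧
        ∀ cf : Polynomial L, cf ∈ CF ↔ cf.degree < (n' : WithBot ℕ) ∧ gF ∣ cf) := by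
  have := Fact.mk hp
  have : CharP F p := charP_of_card_eq_prime_pow hqF
  have : CharP Ω p := charP_of_injective_algebraMap (algebraMap F Ω).injective p
  set ĝ := g.map (iterateFrobenius F p s)
  set gL := ĝ.map (algebraMap F L)
  have hexpand : g ^ p ^ s = expand F (p ^ s) ĝ := by
    rw [← map_expand, map_iterateFrobenius_expand]
  have hgL_dvd : gL ∣ X ^ n' - 1 := by
    simpa using map_dvd (algebraMap F L) <| map_dvd (iterateFrobenius F p s) <|
      dvd_X_pow_sub_one_of_map_eq_prod _ hg_monic hγ hDF_sub hg_roots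
  have hgL_natDegree : gL.natDegree = n' - k' := by
    have h := congrArg natDegree hg_roots
    rwa [natDegree_map, natDegree_finsetProd_X_sub_C_eq_card, hDF_card,
      ← natDegree_map (iterateFrobenius F p s), ← natDegree_map (algebraMap F L)] at h
  have hgL_monic : gL.Monic := (hg_monic.map _).map _
  have hd' : IsLeast (nonzeroWeights (polynomialCode (expand F (p ^ s) ĝ) (p ^ s * n'))) d := by
    simpa only [nonzeroWeights, polynomialCode, Set.mem_ofPred_eq, and_assoc, hexpand] using hd
  have hweight := isLeast_nonzeroWeights_foldedCode (ζ := ζ) hbζ ĝ hd'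
  rw [← foldedCode.eq_1, ← nonzeroWeights.eq_1, hexpand]
  rw [foldedCode_expand hbζ] at hweight ⊢
  have hn' : 0 < n' := Nat.pos_of_ne_zero fun h => hp.one_lt.ne' (by simpa [h] using hn'p)
  refine ⟨fun _ h => h.1, fun _ h₁ _ h₂ => add_mem_polynomialCode h₁ h₂,
    fun a _ h => smul_mem_polynomialCode a h,
    fun _ h => X_mul_modByMonic_mem_polynomialCode hn' hgL_dvd h, ?_, hweight,
    fun hinv => ⟨gL, hgL_monic, ?_, fun _ => Iff.rfl⟩⟩
  · rw [natCard_polynomialCode hgL_monic.ne_zero, hgL_natDegree]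
    congr 1
    omega
  · rw [Polynomial.map_map, ← IsScalarTower.algebraMap_eq,
      map_map_iterateFrobenius_eq_prod _ hg_roots]
    simp_rw [← Units.val_pow_eq_pow_val, ← pow_mul, mul_comm _ (p ^ s)]
    exact prod_comp_pow_mul_eq hγ (hn'p.pow_right s) hDF_sub hinv fun x => X - C (x : Ω)

/-- **Folding a repeated-root cyclic code.**  Let `C` be the
`[n = p^s n', k = p^s k', d]` repeated-root cyclic code over `F_q` whose generator
polynomial is `g^{p^s}`, where `g` generates a simple-root cyclic code of length `n'`
with defining set `D^F ⊆ {0,…,n'-1}` of size `n' - k'` (so `g` maps over the extension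
`Ω` to `Π_{i ∈ D^F} (X - γ^i)` with `γ` of order `n'`).  Fold codewords via the basis
`(1, ζ, …, ζ^{p^s-1})` of `L = F_{q^{p^s}}` over `F_q`.  Then the folded code `C^F`
has all codewords of degree `< n'` (length `n'`), is linear over `L` and cyclic, has
`|L|^{k'}` codewords (dimension `k'`), and has the same minimum Hamming distance `d`.
Moreover, if `D^F` is invariant under multiplication by `p^s` modulo `n'`, then `C^F`
is the simple-root cyclic code with defining set `D^F`, i.e. it has a monic generator
polynomial `g^F` whose roots are exactly the simple roots `γ^i`, `i ∈ D^F`. -/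
theorem folded_repeatedRoot_cyclic_code
    {F L Ω : Type*} [Field F] [Fintype F] [Field L] [Fintype L] [Field Ω]
    [Algebra F L] [Algebra F Ω] [Algebra L Ω] [IsScalarTower F L Ω]
    (p t s n' k' d : ℕ) (hp : p.Prime) (hqF : Fintype.card F = p ^ t) (ht : 0 < t)
    (hn'p : Nat.Coprime n' p) (hk' : k' ≤ n')
    (hqL : Fintype.card L = (p ^ t) ^ p ^ s)
    (ζ : L) (bζ : Module.Basis (Fin (p ^ s)) F L) (hbζ : ∀ u : Fin (p ^ s), bζ u = ζ ^ (u : ℕ))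
    (γ : Ωˣ) (hγ : orderOf γ = n')
    (g : F[X]) (hg_monic : g.Monic)
    (DF : Finset ℕ) (hDF_sub : ∀ i ∈ DF, i < n') (hDF_card : DF.card = n' - k')
    (hg_roots : g.map (algebraMap F Ω) = ∏ i ∈ DF, (X - C ((γ ^ i : Ωˣ) : Ω)))
    (hd : IsLeast {w | ∃ c : F[X],
        c.degree < ((p ^ s * n' : ℕ) : WithBot ℕ) ∧ g ^ p ^ s ∣ c ∧ c ≠ 0 ∧
          w = c.support.card} d) :
    letI CF : Set (Polynomial L) := {cf | ∃ c : F[X],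
      c.degree < ((p ^ s * n' : ℕ) : WithBot ℕ) ∧ g ^ p ^ s ∣ c ∧
        cf = foldPoly F L ζ (p ^ s) n' c}
    (∀ cf ∈ CF, cf.degree < (n' : WithBot ℕ)) ∧
    (∀ cf₁ ∈ CF, ∀ cf₂ ∈ CF, cf₁ + cf₂ ∈ CF) ∧
    (∀ a : L, ∀ cf ∈ CF, a • cf ∈ CF) ∧
    (∀ cf ∈ CF, (X * cf) %ₘ (X ^ n' - 1) ∈ CF) ∧
    Nat.card CF = Fintype.card L ^ k' ∧
    IsLeast {w | ∃ cf ∈ CF, cf ≠ 0 ∧ w = cf.support.card} d ∧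
    ((∀ i ∈ DF, (p ^ s * i) % n' ∈ DF) →
      ∃ gF : Polynomial L, gF.Monic ∧
        gF.map (algebraMap L Ω) = ∏ i ∈ DF, (X - C ((γ ^ i : Ωˣ) : Ω)) ∧
        ∀ cf : Polynomial L, cf ∈ CF ↔ cf.degree < (n' : WithBot ℕ) ∧ gF ∣ cf) :=
  folded_repeatedRoot_cyclic_code_general p t s n' k' d hp hqF hn'p hk' ζ bζ hbζ γ hγ g hg_monic DF
    hDF_sub hDF_card hg_roots hd
end

section
/- Let C be a repeated-root cyclic code of length n = p^s·n' over F_q (gcd(n',p) = 1) with generator polynomial g(X)^{p^s}, where g ∈ F_q[X] has γ^i as a (simple) root for every i in a set D^F ⊆ {0,…,n'−1} and γ has order n' in an extension field of F_q. Then every folded codeword c^F ∈ C^F (viewed as a polynomial of degree < n' over F_{q^{p^s}}) satisfies c^F(γ^{p^s·i mod n'}) = 0 for every i ∈ D^F. -/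
/-! In characteristic `p`, `(X - α) ^ p ^ s = X ^ p ^ s - α ^ p ^ s`, so every codeword `c` (a
multiple of `g ^ p ^ s` with `g(α) = 0`) is divisible by `X ^ p ^ s - β` where `β = α ^ p ^ s`.
Evaluating the folded word at `β` amounts to pairing the coefficients `c_k` with the weights
`w k = ζ ^ (k % p ^ s) * β ^ (k / p ^ s)`. Since `w (k + p ^ s) = β * w k`, this pairing is a
linear form that vanishes on all multiples of `X ^ p ^ s - β`. -/

open Polynomial

theorem Finset.sum_range_mul_eq_sum_sum {M : Type*} [AddCommMonoid M] (f : ℕ → M) (m n : ℕ) :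
    ∑ k ∈ range (m * n), f k = ∑ j ∈ range n, ∑ u ∈ range m, f (u + j * m) := by
  induction n with
  | zero => simp
  | succ n ih =>
    rw [Nat.mul_succ, sum_range_add, ih, sum_range_succ]
    simp only [Nat.mul_comm m n, Nat.add_comm]

namespace Polynomial

section WeightedCoeffSum

variable {R : Type*} [CommSemiring R]

noncomputable def weightedCoeffSum (w : ℕ → R) : R[X] →ₗ[R] R :=
  lsum fun k => LinearMap.mulRight R (w k)

theorem weightedCoeffSum_eq_sum_range (w : ℕ → R) {f : R[X]} {N : ℕ} (hf : f.degree < N) :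
    weightedCoeffSum w f = ∑ k ∈ Finset.range N, f.coeff k * w k := by
  rw [weightedCoeffSum, lsum_apply, sum_def]
  refine Finset.sum_subset (fun k hk => Finset.mem_range.2 ?_) fun k _ hk => ?_
  · exact_mod_cast (le_degree_of_mem_supp k hk).trans_lt hf
  · rw [notMem_support_iff.1 hk, LinearMap.mulRight_apply, zero_mul]

theorem weightedCoeffSum_X_pow_mul {w : ℕ → R} {P : ℕ} {β : R} (hw : ∀ k, w (k + P) = β * w k)
    (f : R[X]) : weightedCoeffSum w (X ^ P * f) = β * weightedCoeffSum w f := by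
  induction f using Polynomial.induction_on' with
  | add f g hf hg => rw [mul_add, map_add, map_add, hf, hg, mul_add]
  | monomial k a =>
    simp only [weightedCoeffSum, X_pow_mul_monomial, lsum_apply, LinearMap.mulRight_apply]
    rw [sum_monomial_index a _ (zero_mul _), sum_monomial_index a _ (zero_mul _), hw]
    ring

theorem weightedCoeffSum_eq_zero_of_dvd {R : Type*} [CommRing R] {w : ℕ → R} {P : ℕ} {β : R}
    (hw : ∀ k, w (k + P) = β * w k) {f : R[X]} (hf : X ^ P - C β ∣ f) :
    weightedCoeffSum w f = 0 := by
  obtain ⟨h, rfl⟩ := hf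
  rw [sub_mul, map_sub, weightedCoeffSum_X_pow_mul hw, ← smul_eq_C_mul, map_smul, smul_eq_mul,
    sub_self]

end WeightedCoeffSum

theorem X_pow_sub_C_dvd_map_of_pow_dvd {R K : Type*} [CommRing R] [CommRing K] [Algebra R K]
    (p s : ℕ) [ExpChar K p] {g c : R[X]} {α : K} (hα : aeval α g = 0) (hc : g ^ p ^ s ∣ c) :
    X ^ p ^ s - C (α ^ p ^ s) ∣ c.map (algebraMap R K) := by
  have hroot : X - C α ∣ g.map (algebraMap R K) := by
    rwa [dvd_iff_isRoot, IsRoot, eval_map_algebraMap]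
  rw [C_pow, ← sub_pow_expChar_pow]
  calc (X - C α) ^ p ^ s ∣ g.map (algebraMap R K) ^ p ^ s := pow_dvd_pow_of_dvd hroot _
    _ = (g ^ p ^ s).map (algebraMap R K) := (Polynomial.map_pow ..).symm
    _ ∣ c.map (algebraMap R K) := Polynomial.map_dvd _ hc

end Polynomial

theorem aeval_foldPoly_eq_weightedCoeffSum {F L Ω : Type*} [Field F] [Field L] [CommSemiring Ω]
    [Algebra F L] [Algebra F Ω] [Algebra L Ω] [IsScalarTower F L Ω] (ζ : L) {P n' : ℕ}
    {c : F[X]} (hc : c.degree < (P * n' : ℕ)) (β : Ω) :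
    aeval β (foldPoly F L ζ P n' c) =
      weightedCoeffSum (fun k => algebraMap L Ω ζ ^ (k % P) * β ^ (k / P))
        (c.map (algebraMap F Ω)) := by
  rw [weightedCoeffSum_eq_sum_range _ ((degree_map_le).trans_lt hc),
    Finset.sum_range_mul_eq_sum_sum, foldPoly, map_sum]
  refine Finset.sum_congr rfl fun j _ => ?_
  rw [map_mul, aeval_C, map_pow, aeval_X, map_sum, Finset.sum_mul]
  refine Finset.sum_congr rfl fun u hu => ?_
  have hu : u < P := Finset.mem_range.1 hu
  rw [Nat.add_mul_mod_self_right, Nat.mod_eq_of_lt hu, Nat.add_mul_div_right _ _ (by omega),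
    Nat.div_eq_of_lt hu, zero_add, coeff_map, IsScalarTower.algebraMap_apply F L Ω, map_mul,
    map_pow]
  ring

theorem foldPoly_root_general
    {F L Ω : Type*} [Field F] [Fintype F] [Field L] [Field Ω]
    [Algebra F L] [Algebra F Ω] [Algebra L Ω] [IsScalarTower F L Ω]
    (p t s n' : ℕ) (hp : p.Prime) (hq : Fintype.card F = p ^ t)
    (ζ : L)
    (γ : Ωˣ) (hγ : orderOf γ = n')
    (g : F[X]) (DF : Finset ℕ)
    (hg_roots : ∀ i ∈ DF, aeval ((γ ^ i : Ωˣ) : Ω) g = 0)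
    (c : F[X]) (hc_deg : c.degree < ((p ^ s * n' : ℕ) : WithBot ℕ))
    (hc_mem : g ^ p ^ s ∣ c) :
    ∀ i ∈ DF,
      aeval ((γ ^ ((p ^ s * i) % n') : Ωˣ) : Ω) (foldPoly F L ζ (p ^ s) n' c) = 0 := by
  intro i hi
  have : Fact p.Prime := ⟨hp⟩
  have : CharP F p := charP_of_card_eq_prime_pow hq
  have : CharP Ω p := charP_of_injective_algebraMap (algebraMap F Ω).injective p
  set β : Ω := ((γ ^ i : Ωˣ) : Ω) ^ p ^ s
  have hpoint : ((γ ^ ((p ^ s * i) % n') : Ωˣ) : Ω) = β := by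
    rw [← hγ, pow_mod_orderOf, mul_comm, pow_mul, Units.val_pow_eq_pow_val]
  have hweight : ∀ k, algebraMap L Ω ζ ^ ((k + p ^ s) % p ^ s) * β ^ ((k + p ^ s) / p ^ s) =
      β * (algebraMap L Ω ζ ^ (k % p ^ s) * β ^ (k / p ^ s)) := fun k => by
    rw [Nat.add_mod_right, Nat.add_div_right _ (pow_pos hp.pos s), pow_succ]
    ring
  rw [hpoint, aeval_foldPoly_eq_weightedCoeffSum ζ hc_deg]
  exact weightedCoeffSum_eq_zero_of_dvd hweight
    (X_pow_sub_C_dvd_map_of_pow_dvd p s (hg_roots i hi) hc_mem)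

/-- **Roots of folded codewords.**  Let `C` be the repeated-root cyclic code of length
`n = p^s * n'` over `F_q` (`gcd(n', p) = 1`) with generator polynomial `g^{p^s}`, where
`γ^i` is a root of `g` for every `i` in `D^F ⊆ {0,…,n'-1}` and `γ` has order `n'` in an
extension field `Ω`.  Then every folded codeword `c^F` satisfies
`c^F(γ^{p^s · i mod n'}) = 0` for every `i ∈ D^F`. -/
theorem foldPoly_root
    {F L Ω : Type*} [Field F] [Fintype F] [Field L] [Field Ω]
    [Algebra F L] [Algebra F Ω] [Algebra L Ω] [IsScalarTower F L Ω]
    (p t s n' : ℕ) (hp : p.Prime) (hq : Fintype.card F = p ^ t) (ht : 0 < t)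
    (hn'p : Nat.Coprime n' p)
    (ζ : L) (bζ : Module.Basis (Fin (p ^ s)) F L) (hbζ : ∀ u : Fin (p ^ s), bζ u = ζ ^ (u : ℕ))
    (γ : Ωˣ) (hγ : orderOf γ = n')
    (g : F[X]) (DF : Finset ℕ) (hDF : ∀ i ∈ DF, i < n')
    (hg_roots : ∀ i ∈ DF, aeval ((γ ^ i : Ωˣ) : Ω) g = 0)
    (c : F[X]) (hc_deg : c.degree < ((p ^ s * n' : ℕ) : WithBot ℕ))
    (hc_mem : g ^ p ^ s ∣ c) :
    ∀ i ∈ DF,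
      aeval ((γ ^ ((p ^ s * i) % n') : Ωˣ) : Ω) (foldPoly F L ζ (p ^ s) n' c) = 0 :=
  foldPoly_root_general p t s n' hp hq ζ γ hγ g DF hg_roots c hc_deg hc_mem
end

section
/- Let A be an [n_a = p^s·n'_a, k_a, d_a] repeated-root cyclic code over F_q (gcd(n'_a, p) = 1) with defining set D_A relative to an element α of order n'_a, and let B be an [n_b, k_b, d_b] simple-root cyclic code over F_q with defining set D_B relative to an element β of order n_b, where gcd(n_a, n_b) = 1. Set D̄_B = { i^⟨p^s⟩ : i ∈ D_B }. Then, relative to the element γ = αβ of order n'_a·n_b, the defining set of the repeated-root cyclic product code C = A ⊗ B (a code of length p^s·n'_a·n_b) is D_C = ( D_A ∪ D_A^{[n'_a]} ∪ D_A^{[2 n'_a]} ∪ … ∪ D_A^{[(n_b−1) n'_a]} ) ∪_max ( D̄_B ∪ D̄_B^{[n_b]} ∪ D̄_B^{[2 n_b]} ∪ … ∪ D̄_B^{[(n'_a−1) n_b]} ), where all index shifts are taken modulo n'_a·n_b. -/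
/-!
Choose `r, t` with `r ≡ 1, t ≡ 0 (mod p^s n'_a)`, `r ≡ 0, t ≡ 1 (mod n_b)` and `p ∤ r`, so that
`γ^(i r) = α^i` and `γ^(i t) = β^i`. Modulo `X^N - 1` the serialization of an array `M` is
`∑ M u v X^(r u + t v) = ∑_v col_v(X^r) X^(t v) = ∑_u row_u(X^t) X^(r u)`.

Lower bound: unless `g_C = X^N - 1`, `g_C` is itself a codeword. Its columns are multiples of
`g_a`, so `(X - γ^i)^e` divides every `col_v(X^r)`, `e` being the multiplicity of `α^i` in `g_a`;
when `β^i` is a root of `g_b`, every `row_u(X^t)` is a multiple of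
`X^t - β^i = (X^(t/p^s) - γ^(i t/p^s))^(p^s)`. Both exponents are at most `p^s`, the multiplicity
of `γ^i` in `X^N - 1 = (X^(n'_a n_b) - 1)^(p^s)`, so these powers of `X - γ^i` divide `g_C`.

Upper bound: `g_C` divides `X^N - 1` and the codeword `g_a ⊗ g_b ≡ g_a(X^r) g_b(X^t)`. As `p ∤ r`,
`γ^i` is a simple root of `X^r - α^i`, so its multiplicity in `g_a(X^r)` is that of `α^i` in `g_a`.
-/

open Polynomial

section Expand

variable {R : Type*} [CommRing R]

theorem X_sub_C_dvd_X_pow_sub_C_pow (ξ : R) (r : ℕ) : X - C ξ ∣ X ^ r - C (ξ ^ r) := by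
  simpa only [C_pow] using sub_dvd_pow_sub_pow X (C ξ) r

theorem X_sub_C_pow_dvd_expand {ξ : R} {e : ℕ} {f : R[X]} (r : ℕ)
    (h : (X - C (ξ ^ r)) ^ e ∣ f) : (X - C ξ) ^ e ∣ expand R r f := by
  have h' := map_dvd (expand R r) h
  rw [map_pow, map_sub, expand_X, expand_C] at h'
  exact (pow_dvd_pow_of_dvd (X_sub_C_dvd_X_pow_sub_C_pow ξ r) e).trans h'

theorem X_sub_C_pow_expChar_pow_dvd_expand (p : ℕ) [ExpChar R p] {ξ : R} {k r : ℕ} {f : R[X]}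
    (hr : p ^ k ∣ r) (h : X - C (ξ ^ r) ∣ f) : (X - C ξ) ^ p ^ k ∣ expand R r f := by
  obtain ⟨r, rfl⟩ := hr
  rw [pow_mul] at h
  have h₁ := X_sub_C_pow_dvd_expand (ξ := ξ ^ p ^ k) (e := 1) (f := f) r (by rwa [pow_one])
  rw [pow_one] at h₁
  have h₂ := map_dvd (expand R (p ^ k)) h₁
  rwa [map_sub, expand_X, expand_C, ← expand_mul, C_pow, ← sub_pow_expChar_pow] at h₂

end Expand

section RootMultiplicity

variable {K : Type*} [Field K]

theorem degree_lt_of_monic_dvd_X_pow_sub_one {g : K[X]} {n : ℕ} (hg : g.Monic) (hn : 0 < n)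
    (hdvd : g ∣ X ^ n - 1) (hne : g ≠ X ^ n - 1) : g.degree < n := by
  have hmonic : (X ^ n - 1 : K[X]).Monic := by simpa using monic_X_pow_sub_C (1 : K) hn.ne'
  have hdeg : (X ^ n - 1 : K[X]).natDegree = n := by
    simpa using natDegree_X_pow_sub_C (n := n) (r := (1 : K))
  have hlt : g.natDegree < n := hdeg ▸ (natDegree_le_of_dvd hdvd hmonic.ne_zero).lt_of_ne
    fun h => hne (eq_of_monic_of_dvd_of_natDegree_le hg hmonic hdvd h.ge).symm
  exact degree_le_natDegree.trans_lt (by exact_mod_cast hlt)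

theorem rootMultiplicity_expand_of_cast_ne_zero {r : ℕ} (hr : (r : K) ≠ 0) {ξ : K} (hξ : ξ ≠ 0)
    (f : K[X]) : (expand K r f).rootMultiplicity ξ = f.rootMultiplicity (ξ ^ r) := by
  obtain rfl | hf := eq_or_ne f 0
  · simp
  obtain ⟨g, hfg, hg⟩ := f.exists_eq_pow_rootMultiplicity_mul_and_not_dvd hf (ξ ^ r)
  obtain ⟨h, hh⟩ := X_sub_C_dvd_X_pow_sub_C_pow ξ r
  -- comparing derivatives at `ξ` shows that `ξ` is a simple root of `X ^ r - ξ ^ r`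
  have hhξ : h.eval ξ ≠ 0 := by
    have := congrArg (fun q => (derivative q).eval ξ) hh
    simp only [derivative_sub, derivative_X_pow, derivative_C, derivative_mul, derivative_X,
      eval_sub, eval_mul, eval_add, eval_pow, eval_X, eval_C, sub_self, zero_mul, one_mul,
      sub_zero, add_zero] at this
    rw [← this]
    exact mul_ne_zero hr (pow_ne_zero _ hξ)
  have hgξ : (expand K r g).eval ξ ≠ 0 := by
    rw [expand_eval]
    exact fun h0 => hg (dvd_iff_isRoot.mpr h0)
  set e := f.rootMultiplicity (ξ ^ r)
  have hexp : expand K r f = h ^ e * expand K r g * (X - C ξ) ^ e := by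
    rw [hfg, map_mul, map_pow, map_sub, expand_X, expand_C, hh, mul_pow]
    ring
  have hne : (h ^ e * expand K r g).eval ξ ≠ 0 := by
    rw [eval_mul, eval_pow]
    exact mul_ne_zero (pow_ne_zero _ hhξ) hgξ
  rw [hexp, rootMultiplicity_mul_X_sub_C_pow (fun h0 => hne (by simp [h0])),
    rootMultiplicity_eq_zero hne, zero_add]

theorem rootMultiplicity_X_pow_sub_one (p : ℕ) [ExpChar K p] (k : ℕ) {n : ℕ} (hn : (n : K) ≠ 0)
    {ξ : K} (hξ : ξ ^ n = 1) : rootMultiplicity ξ (X ^ (p ^ k * n) - 1 : K[X]) = p ^ k := by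
  have hξ0 : ξ ≠ 0 := by
    rintro rfl
    rw [zero_pow (by rintro rfl; exact hn Nat.cast_zero)] at hξ
    exact zero_ne_one hξ
  have hξ' : (ξ ^ p ^ k) ^ n = 1 := by rw [← pow_mul, mul_comm, pow_mul, hξ, one_pow]
  have hexp : (X ^ (p ^ k * n) - 1 : K[X]) = expand K (p ^ k * n) (X - C 1) := by
    rw [map_sub, expand_X, expand_C, C_1]
  rw [hexp, expand_mul, rootMultiplicity_expand_pow, rootMultiplicity_expand_of_cast_ne_zero hn
    (pow_ne_zero _ hξ0), hξ', rootMultiplicity_X_sub_C_self, mul_one]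

theorem rootMultiplicity_le_of_dvd_expand_mul_expand {r t : ℕ} (hr : (r : K) ≠ 0) {ξ : K}
    (hξ : ξ ≠ 0) {a b g : K[X]} (ha : a ≠ 0) (hb : ¬ b.IsRoot (ξ ^ t))
    (hg : g ∣ expand K r a * expand K t b) :
    rootMultiplicity ξ g ≤ rootMultiplicity (ξ ^ r) a := by
  have hbξ : ¬ (expand K t b).IsRoot ξ := by rwa [IsRoot, expand_eval]
  have hr0 : 0 < r := Nat.pos_of_ne_zero fun h => hr (by rw [h, Nat.cast_zero])
  have hne : expand K r a * expand K t b ≠ 0 :=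
    mul_ne_zero ((expand_ne_zero hr0).mpr ha) fun h => hbξ (by simp [h])
  calc rootMultiplicity ξ g ≤ rootMultiplicity ξ (expand K r a * expand K t b) :=
        rootMultiplicity_le_rootMultiplicity_of_dvd hne hg ξ
    _ = rootMultiplicity (ξ ^ r) a := by
      rw [rootMultiplicity_mul hne, rootMultiplicity_expand_of_cast_ne_zero hr hξ,
        rootMultiplicity_eq_zero hbξ, add_zero]

end RootMultiplicity

section Arithmetic

theorem exists_crt_exponents {p m n : ℕ} (hmn : m.Coprime n) (hpn : p.Coprime n) :
    ∃ r t : ℕ, r ≡ 1 [MOD m] ∧ n ∣ r ∧ r.Coprime p ∧ m ∣ t ∧ t ≡ 1 [MOD n] := by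
  obtain ⟨r, hr₁, hr₀⟩ := Nat.chineseRemainder (hpn.mul_left hmn) 1 0
  obtain ⟨t, ht₀, ht₁⟩ := Nat.chineseRemainder hmn 0 1
  exact ⟨r, t, hr₁.of_mul_left p, Nat.modEq_zero_iff_dvd.mp hr₀,
    (hr₁.of_mul_right m).gcd_eq.trans (Nat.gcd_one_left p), Nat.modEq_zero_iff_dvd.mp ht₀, ht₁⟩

variable {m n r t : ℕ}

theorem add_mul_mod_modEq (hmn : m.Coprime n) (hr₁ : r ≡ 1 [MOD m]) (hr₀ : n ∣ r) (ht₀ : m ∣ t)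
    (ht₁ : t ≡ 1 [MOD n]) (ℓ : ℕ) : r * (ℓ % m) + t * (ℓ % n) ≡ ℓ [MOD m * n] := by
  refine (Nat.modEq_and_modEq_iff_modEq_mul hmn).mp ⟨?_, ?_⟩
  · have := (hr₁.mul_right (ℓ % m)).add ((Nat.modEq_zero_iff_dvd.mpr ht₀).mul_right (ℓ % n))
    rw [one_mul, zero_mul, add_zero] at this
    exact this.trans (Nat.mod_modEq ℓ m)
  · have := ((Nat.modEq_zero_iff_dvd.mpr hr₀).mul_right (ℓ % m)).add (ht₁.mul_right (ℓ % n))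
    rw [one_mul, zero_mul, zero_add] at this
    exact this.trans (Nat.mod_modEq ℓ n)

theorem bijective_fin_mod_of_coprime (hmn : m.Coprime n) (hm : 0 < m) (hn : 0 < n) :
    Function.Bijective fun ℓ : Fin (m * n) =>
      ((⟨ℓ % m, Nat.mod_lt _ hm⟩ : Fin m), (⟨ℓ % n, Nat.mod_lt _ hn⟩ : Fin n)) := by
  refine (Fintype.bijective_iff_injective_and_card _).mpr ⟨fun ℓ ℓ' h => ?_, by simp⟩
  simp only [Prod.mk.injEq, Fin.mk.injEq] at h
  exact Fin.ext (Nat.ModEq.eq_of_lt_of_lt ((Nat.modEq_and_modEq_iff_modEq_mul hmn).mp h) ℓ.2 ℓ'.2)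

theorem mul_pow_pow_eq_pow_mod_orderOf {G : Type*} [CommMonoid G] {a b : G}
    (ha : r ≡ 1 [MOD orderOf a]) (hb : orderOf b ∣ r) (i : ℕ) :
    ((a * b) ^ i) ^ r = a ^ (i % orderOf a) := by
  rw [← pow_mul, mul_pow, orderOf_dvd_iff_pow_eq_one.mp (dvd_mul_of_dvd_right hb i), mul_one,
    ← pow_mod_orderOf a (i * r)]
  have h : i * r % orderOf a = i % orderOf a := by simpa [Nat.ModEq] using ha.mul_left i
  rw [h]

theorem val_pow_pow_eq_one_of_orderOf_dvd {M : Type*} [Monoid M] (u : Mˣ) (k : ℕ) {N : ℕ}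
    (h : orderOf u ∣ N) : ((u ^ k : Mˣ) : M) ^ N = 1 := by
  rw [← Units.val_pow_eq_pow_val, pow_right_comm, orderOf_dvd_iff_pow_eq_one.mp h, one_pow,
    Units.val_one]

end Arithmetic

section Serialization

variable {R : Type*} [CommRing R] {m n r t : ℕ}

theorem X_pow_sub_one_dvd_X_pow_sub_X_pow {N a b : ℕ} (h : a ≡ b [MOD N]) :
    (X ^ N - 1 : R[X]) ∣ X ^ a - X ^ b := by
  have key : ∀ a, (X ^ N - 1 : R[X]) ∣ X ^ a - X ^ (a % N) := fun a => by
    have := (sub_dvd_pow_sub_pow (X ^ N : R[X]) 1 (a / N)).mul_left (X ^ (a % N))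
    rwa [one_pow, mul_sub, mul_one, ← pow_mul, ← pow_add, Nat.mod_add_div] at this
  have := dvd_sub (key a) (key b)
  rwa [h, sub_sub_sub_cancel_right] at this

theorem sum_fin_C_coeff_mul_X_pow {p : R[X]} (hp : p.degree < n) :
    ∑ i : Fin n, C (p.coeff i) * X ^ (i : ℕ) = p := by
  rw [sum_fin (fun i a => C a * X ^ i) (by simp) hp, sum_C_mul_X_pow_eq]

theorem coeff_sum_fin_C_mul_X_pow (f : Fin n → R) (i : Fin n) :
    (∑ j : Fin n, C (f j) * X ^ (j : ℕ)).coeff i = f i := by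
  simp [finsetSum_coeff, Fin.val_inj]

theorem X_pow_mul_sub_one_dvd_sub_sum_sum (hmn : m.Coprime n) (hm : 0 < m) (hn : 0 < n)
    (hr₁ : r ≡ 1 [MOD m]) (hr₀ : n ∣ r) (ht₀ : m ∣ t) (ht₁ : t ≡ 1 [MOD n]) {c : R[X]}
    (hc : c.degree < ↑(m * n)) (M : Fin m → Fin n → R)
    (hcM : ∀ ℓ : Fin (m * n), c.coeff ℓ = M ⟨ℓ % m, Nat.mod_lt _ hm⟩ ⟨ℓ % n, Nat.mod_lt _ hn⟩) :
    (X ^ (m * n) - 1 : R[X]) ∣ c - ∑ u : Fin m, ∑ v : Fin n, C (M u v) * X ^ (r * u + t * v) := by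
  rw [← Fintype.sum_prod_type', ← Fintype.sum_bijective _ (bijective_fin_mod_of_coprime hmn hm hn)
    _ (fun uv => C (M uv.1 uv.2) * X ^ (r * uv.1 + t * uv.2)) fun _ => rfl]
  conv_rhs => rw [← sum_fin_C_coeff_mul_X_pow hc]
  rw [← Finset.sum_sub_distrib]
  refine Finset.dvd_sum fun ℓ _ => ?_
  rw [hcM, ← mul_sub]
  exact (X_pow_sub_one_dvd_X_pow_sub_X_pow
    (add_mul_mod_modEq hmn hr₁ hr₀ ht₀ ht₁ ℓ).symm).mul_left _

theorem sum_sum_C_mul_X_pow_eq_sum_expand (r t : ℕ) (M : Fin m → Fin n → R) :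
    ∑ u : Fin m, ∑ v : Fin n, C (M u v) * X ^ (r * u + t * v) =
      ∑ v : Fin n, expand R r (∑ u : Fin m, C (M u v) * X ^ (u : ℕ)) * X ^ (t * v) := by
  rw [Finset.sum_comm]
  refine Finset.sum_congr rfl fun v _ => ?_
  rw [map_sum, Finset.sum_mul]
  refine Finset.sum_congr rfl fun u _ => ?_
  rw [map_mul, expand_C, map_pow, expand_X, ← pow_mul, pow_add, mul_assoc]

theorem sum_sum_C_coeff_mul_coeff_mul_X_pow {a b : R[X]} (ha : a.degree < m) (hb : b.degree < n)
    (r t : ℕ) : ∑ u : Fin m, ∑ v : Fin n, C (a.coeff u * b.coeff v) * X ^ (r * u + t * v) =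
      expand R r a * expand R t b := by
  conv_rhs => rw [← sum_fin_C_coeff_mul_X_pow ha, ← sum_fin_C_coeff_mul_X_pow hb]
  simp only [map_sum, map_mul, expand_C, map_pow, expand_X, Finset.sum_mul_sum, pow_add,
    ← pow_mul, mul_comm r, mul_comm t]
  exact Finset.sum_congr rfl fun u _ => Finset.sum_congr rfl fun v _ => by ring

end Serialization

section ProductCode

variable {R : Type*} [CommRing R] {m n r t : ℕ}

/-- The coefficients of `c` below `m * n` serialize, through `ℓ ↦ (ℓ % m, ℓ % n)`, an `m × n`
array whose columns lie in the cyclic code generated by `a` and whose rows lie in the one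
generated by `b`. -/
def IsProductCodeword (a b : R[X]) (hm : 0 < m) (hn : 0 < n) (c : R[X]) : Prop :=
  ∃ M : Fin m → Fin n → R,
    (∀ v, a ∣ ∑ u : Fin m, C (M u v) * X ^ (u : ℕ)) ∧
    (∀ u, b ∣ ∑ v : Fin n, C (M u v) * X ^ (v : ℕ)) ∧
    ∀ ℓ : Fin (m * n), c.coeff ℓ = M ⟨ℓ % m, Nat.mod_lt _ hm⟩ ⟨ℓ % n, Nat.mod_lt _ hn⟩

namespace IsProductCodeword

variable {a b c : R[X]} {hm : 0 < m} {hn : 0 < n}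

theorem swap (hc : IsProductCodeword a b hm hn c) : IsProductCodeword b a hn hm c := by
  obtain ⟨M, hcol, hrow, hcM⟩ := hc
  exact ⟨fun v u => M u v, hrow, hcol, fun ℓ => hcM ⟨ℓ, mul_comm n m ▸ ℓ.2⟩⟩

theorem map {S : Type*} [CommRing S] (f : R →+* S) (hc : IsProductCodeword a b hm hn c) :
    IsProductCodeword (a.map f) (b.map f) hm hn (c.map f) := by
  obtain ⟨M, hcol, hrow, hcM⟩ := hc
  refine ⟨fun u v => f (M u v), fun v => ?_, fun u => ?_, fun ℓ => by rw [coeff_map, hcM]⟩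
  · simpa [Polynomial.map_sum] using Polynomial.map_dvd f (hcol v)
  · simpa [Polynomial.map_sum] using Polynomial.map_dvd f (hrow u)

theorem dvd_of_forall_dvd_expand (hc : IsProductCodeword a b hm hn c)
    (hdeg : c.degree < ↑(m * n)) (hmn : m.Coprime n) (hr₁ : r ≡ 1 [MOD m]) (hr₀ : n ∣ r)
    (ht₀ : m ∣ t) (ht₁ : t ≡ 1 [MOD n]) {d : R[X]} (hd : d ∣ X ^ (m * n) - 1)
    (ha : ∀ q, a ∣ q → d ∣ expand R r q) : d ∣ c := by
  obtain ⟨M, hcol, -, hcM⟩ := hc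
  have hsum := X_pow_mul_sub_one_dvd_sub_sum_sum hmn hm hn hr₁ hr₀ ht₀ ht₁ hdeg M hcM
  rw [sum_sum_C_mul_X_pow_eq_sum_expand] at hsum
  exact (dvd_sub_left (Finset.dvd_sum fun v _ => (ha _ (hcol v)).mul_right _)).mp (hd.trans hsum)

end IsProductCodeword

theorem dvd_expand_mul_expand_of_forall_isProductCodeword (hmn : m.Coprime n) (hm : 0 < m)
    (hn : 0 < n) (hr₁ : r ≡ 1 [MOD m]) (hr₀ : n ∣ r) (ht₀ : m ∣ t) (ht₁ : t ≡ 1 [MOD n])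
    {a b g : R[X]} (ha : a.degree < m) (hb : b.degree < n) (hg : g ∣ X ^ (m * n) - 1)
    (hcode : ∀ c : R[X], c.degree < ↑(m * n) → IsProductCodeword a b hm hn c → g ∣ c) :
    g ∣ expand R r a * expand R t b := by
  let M : Fin m → Fin n → R := fun u v => a.coeff u * b.coeff v
  let c : R[X] := ∑ ℓ : Fin (m * n),
    C (M ⟨ℓ % m, Nat.mod_lt _ hm⟩ ⟨ℓ % n, Nat.mod_lt _ hn⟩) * X ^ (ℓ : ℕ)
  have hdeg : c.degree < ↑(m * n) := degree_sum_fin_lt _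
  have hcM : ∀ ℓ : Fin (m * n), c.coeff ℓ = M ⟨ℓ % m, Nat.mod_lt _ hm⟩ ⟨ℓ % n, Nat.mod_lt _ hn⟩ :=
    coeff_sum_fin_C_mul_X_pow _
  have hc : IsProductCodeword a b hm hn c := by
    refine ⟨M, fun v => Dvd.intro (C (b.coeff v)) ?_, fun u => Dvd.intro_left (C (a.coeff u)) ?_,
      hcM⟩
    · conv_lhs => rw [← sum_fin_C_coeff_mul_X_pow ha]
      simp only [M, Finset.sum_mul, C_mul]
      exact Finset.sum_congr rfl fun u _ => by ring
    · conv_lhs => rw [← sum_fin_C_coeff_mul_X_pow hb]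
      simp only [M, Finset.mul_sum, C_mul]
      exact Finset.sum_congr rfl fun v _ => by ring
  have hsum := X_pow_mul_sub_one_dvd_sub_sum_sum hmn hm hn hr₁ hr₀ ht₀ ht₁ hdeg M hcM
  rw [sum_sum_C_coeff_mul_coeff_mul_X_pow ha hb] at hsum
  exact (dvd_sub_right (hcode c hdeg hc)).mp (hg.trans hsum)

end ProductCode

section ProductCodeRoots

variable {K : Type*} [Field K] {m n r t : ℕ}

namespace IsProductCodeword

variable {hm : 0 < m} {hn : 0 < n} {a b c : K[X]}

theorem rootMultiplicity_left_le (hc : IsProductCodeword a b hm hn c) (hc0 : c ≠ 0)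
    (hdeg : c.degree < ↑(m * n)) (hmn : m.Coprime n) (hr₁ : r ≡ 1 [MOD m]) (hr₀ : n ∣ r)
    (ht₀ : m ∣ t) (ht₁ : t ≡ 1 [MOD n]) {ξ : K}
    (h : rootMultiplicity (ξ ^ r) a ≤ rootMultiplicity ξ (X ^ (m * n) - 1)) :
    rootMultiplicity (ξ ^ r) a ≤ rootMultiplicity ξ c :=
  (le_rootMultiplicity_iff hc0).mpr <| hc.dvd_of_forall_dvd_expand hdeg hmn hr₁ hr₀ ht₀ ht₁
    ((le_rootMultiplicity_iff (X_pow_sub_C_ne_zero (Nat.mul_pos hm hn) 1)).mp h)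
    fun _ hq => X_sub_C_pow_dvd_expand r ((pow_rootMultiplicity_dvd a _).trans hq)

theorem pow_le_rootMultiplicity_of_isRoot_right (p : ℕ) [ExpChar K p] {k : ℕ}
    (hc : IsProductCodeword a b hm hn c) (hc0 : c ≠ 0) (hdeg : c.degree < ↑(m * n))
    (hmn : m.Coprime n) (hr₁ : r ≡ 1 [MOD m]) (hr₀ : n ∣ r) (ht₀ : m ∣ t) (ht₁ : t ≡ 1 [MOD n])
    (hk : p ^ k ∣ m) {ξ : K} (h : p ^ k ≤ rootMultiplicity ξ (X ^ (m * n) - 1))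
    (hb : b.IsRoot (ξ ^ t)) : p ^ k ≤ rootMultiplicity ξ c :=
  (le_rootMultiplicity_iff hc0).mpr <| hc.swap.dvd_of_forall_dvd_expand (mul_comm m n ▸ hdeg)
    hmn.symm ht₁ ht₀ hr₀ hr₁
    (mul_comm n m ▸ (le_rootMultiplicity_iff (X_pow_sub_C_ne_zero (Nat.mul_pos hm hn) 1)).mp h)
    fun _ hq => X_sub_C_pow_expChar_pow_dvd_expand p (hk.trans ht₀)
      ((dvd_iff_isRoot.mpr hb).trans hq)

end IsProductCodeword

open Classical in
theorem rootMultiplicity_map_eq_max_of_isProductCodeword_iff {F : Type*} [Field F] (f : F →+* K)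
    (p : ℕ) [ExpChar K p] {k : ℕ} (hm : 0 < m) (hn : 0 < n) (hmn : m.Coprime n)
    (hr₁ : r ≡ 1 [MOD m]) (hr₀ : n ∣ r) (ht₀ : m ∣ t) (ht₁ : t ≡ 1 [MOD n]) (hkm : p ^ k ∣ m)
    (hr : (r : K) ≠ 0) {a b g : F[X]} (ha_monic : a.Monic) (ha_dvd : a ∣ X ^ m - 1)
    (hb_monic : b.Monic) (hb_dvd : b ∣ X ^ n - 1) (hg_monic : g.Monic)
    (hg_dvd : g ∣ X ^ (m * n) - 1)
    (hgen : ∀ c : F[X], c.degree < ↑(m * n) → (IsProductCodeword a b hm hn c ↔ g ∣ c))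
    {ξ : K} (hξ : ξ ≠ 0) (hξg : rootMultiplicity ξ (X ^ (m * n) - 1) = p ^ k)
    (hξa : rootMultiplicity (ξ ^ r) (X ^ m - 1) = p ^ k) (hξb : (ξ ^ t) ^ n = 1) :
    rootMultiplicity ξ (g.map f) =
      max (rootMultiplicity (ξ ^ r) (a.map f)) (if (b.map f).IsRoot (ξ ^ t) then p ^ k else 0) := by
  have hgk : rootMultiplicity ξ (g.map f) ≤ p ^ k := hξg ▸
    rootMultiplicity_le_rootMultiplicity_of_dvd (X_pow_sub_C_ne_zero (Nat.mul_pos hm hn) 1)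
      (by simpa using Polynomial.map_dvd f hg_dvd) ξ
  have hak : rootMultiplicity (ξ ^ r) (a.map f) ≤ p ^ k := hξa ▸
    rootMultiplicity_le_rootMultiplicity_of_dvd (X_pow_sub_C_ne_zero hm 1)
      (by simpa using Polynomial.map_dvd f ha_dvd) _
  refine le_antisymm ?_ ?_
  · split_ifs with hbξ
    · exact hgk.trans (le_max_right _ _)
    rw [max_eq_left (Nat.zero_le _)]
    by_cases haX : a = X ^ m - 1
    · exact hgk.trans (by simpa [haX] using hξa.ge)
    have hbX : b ≠ X ^ n - 1 := by
      rintro rfl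
      exact hbξ (by simp [hξb])
    have hdvd := Polynomial.map_dvd f <| dvd_expand_mul_expand_of_forall_isProductCodeword hmn hm
      hn hr₁ hr₀ ht₀ ht₁ (degree_lt_of_monic_dvd_X_pow_sub_one ha_monic hm ha_dvd haX)
      (degree_lt_of_monic_dvd_X_pow_sub_one hb_monic hn hb_dvd hbX) hg_dvd
      fun c hc => (hgen c hc).mp
    rw [Polynomial.map_mul, map_expand, map_expand] at hdvd
    exact rootMultiplicity_le_of_dvd_expand_mul_expand hr hξ (ha_monic.map f).ne_zero hbξ hdvd
  · by_cases hgX : g = X ^ (m * n) - 1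
    · have hgξ : rootMultiplicity ξ (g.map f) = p ^ k := by simpa [hgX] using hξg
      rw [hgξ]
      exact max_le hak (by split_ifs <;> simp)
    have hdeg := degree_lt_of_monic_dvd_X_pow_sub_one hg_monic (Nat.mul_pos hm hn) hg_dvd hgX
    have hcode := ((hgen g hdeg).mpr dvd_rfl).map f
    have hdegK : (g.map f).degree < ↑(m * n) := degree_map_le.trans_lt hdeg
    have hg0 : g.map f ≠ 0 := (hg_monic.map f).ne_zero
    refine max_le (hcode.rootMultiplicity_left_le hg0 hdegK hmn hr₁ hr₀ ht₀ ht₁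
      (hak.trans hξg.ge)) ?_
    split_ifs with hbξ
    · exact hcode.pow_le_rootMultiplicity_of_isRoot_right p hg0 hdegK hmn hr₁ hr₀ ht₀ ht₁ hkm
        hξg.ge hbξ
    · exact Nat.zero_le _

end ProductCodeRoots

theorem definingSet_of_repeatedRoot_cyclic_product_code_general
    {F K : Type*} [Field F] [Fintype F] [Field K] [Algebra F K]
    (p t s n'a nb : ℕ) (hp : p.Prime) (hq : Fintype.card F = p ^ t)
    (hn'a : Nat.Coprime n'a p) (hnbp : Nat.Coprime nb p)
    (hcop : Nat.Coprime (p ^ s * n'a) nb)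
    (hna : 0 < p ^ s * n'a) (hnb : 0 < nb)
    (α β : Kˣ) (hα : orderOf α = n'a) (hβ : orderOf β = nb)
    (ga gb : F[X]) (hga_monic : ga.Monic) (hga_dvd : ga ∣ X ^ (p ^ s * n'a) - 1)
    (hgb_monic : gb.Monic) (hgb_dvd : gb ∣ X ^ nb - 1)
    (DB : Finset ℕ)
    (hDB : ∀ i : ℕ, i ∈ DB ↔ i < nb ∧ aeval ((β ^ i : Kˣ) : K) gb = 0)
    (gC : F[X]) (hgC_monic : gC.Monic)
    (hgC_dvd : gC ∣ X ^ (p ^ s * n'a * nb) - 1)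
    (hgen : ∀ c : F[X], c.degree < ((p ^ s * n'a * nb : ℕ) : WithBot ℕ) →
      ((∃ M : Fin (p ^ s * n'a) → Fin nb → F,
          (∀ j : Fin nb, ga ∣ ∑ i : Fin (p ^ s * n'a), C (M i j) * X ^ (i : ℕ)) ∧
          (∀ i : Fin (p ^ s * n'a), gb ∣ ∑ j : Fin nb, C (M i j) * X ^ (j : ℕ)) ∧
          ∀ ℓ : Fin (p ^ s * n'a * nb),
            c.coeff ℓ = M ⟨(ℓ : ℕ) % (p ^ s * n'a), Nat.mod_lt _ hna⟩
              ⟨(ℓ : ℕ) % nb, Nat.mod_lt _ hnb⟩) ↔ gC ∣ c)) :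
    ∀ i < n'a * nb,
      rootMultiplicity (((α * β) ^ i : Kˣ) : K) (gC.map (algebraMap F K)) =
        max (rootMultiplicity ((α ^ (i % n'a) : Kˣ) : K) (ga.map (algebraMap F K)))
          (if i % nb ∈ DB then p ^ s else 0) := by
  intro i _
  have : Fact p.Prime := ⟨hp⟩
  have : CharP F p := charP_of_card_eq_prime_pow hq
  have : CharP K p := charP_of_injective_algebraMap (algebraMap F K).injective p
  have hcast : ∀ k : ℕ, k.Coprime p → (k : K) ≠ 0 := fun k hk =>
    (CharP.cast_eq_zero_iff K p k).not.mpr ((Nat.Prime.coprime_iff_not_dvd hp).mp hk.symm)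
  obtain ⟨r, t, hr₁, hr₀, hrp, ht₀, ht₁⟩ := exists_crt_exponents hcop hnbp.symm
  set ξ : K := (((α * β) ^ i : Kˣ) : K)
  have hξr : ξ ^ r = ((α ^ (i % n'a) : Kˣ) : K) := by
    rw [← Units.val_pow_eq_pow_val, ← hα,
      mul_pow_pow_eq_pow_mod_orderOf (hα ▸ hr₁.of_mul_left _) (hβ ▸ hr₀)]
  have hξt : ξ ^ t = ((β ^ (i % nb) : Kˣ) : K) := by
    rw [← Units.val_pow_eq_pow_val, mul_comm α, ← hβ,
      mul_pow_pow_eq_pow_mod_orderOf (hβ ▸ ht₁) (hα ▸ (dvd_mul_left _ _).trans ht₀)]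
  have hξg : rootMultiplicity ξ (X ^ (p ^ s * n'a * nb) - 1 : K[X]) = p ^ s := by
    rw [mul_assoc]
    exact rootMultiplicity_X_pow_sub_one p s (hcast _ (hn'a.mul_left hnbp))
      (val_pow_pow_eq_one_of_orderOf_dvd _ i
        (hα ▸ hβ ▸ (Commute.all α β).orderOf_mul_dvd_mul_orderOf))
  have hξa : rootMultiplicity (ξ ^ r) (X ^ (p ^ s * n'a) - 1 : K[X]) = p ^ s := hξr ▸
    rootMultiplicity_X_pow_sub_one p s (hcast _ hn'a) (val_pow_pow_eq_one_of_orderOf_dvd _ _ hα.dvd)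
  have hDB' : i % nb ∈ DB ↔ (gb.map (algebraMap F K)).IsRoot (ξ ^ t) := by
    rw [hDB, IsRoot.def, eval_map_algebraMap, hξt]
    simp [Nat.mod_lt _ hnb]
  classical
  rw [← hξr]
  convert rootMultiplicity_map_eq_max_of_isProductCodeword_iff (algebraMap F K) p hna hnb hcop
    hr₁ hr₀ ht₀ ht₁ (dvd_mul_right _ _) (hcast r hrp) hga_monic hga_dvd hgb_monic hgb_dvd
    hgC_monic hgC_dvd hgen (Units.ne_zero _) hξg hξa (hξt ▸ val_pow_pow_eq_one_of_orderOf_dvd _ _ hβ.dvd) using 2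
  exact if_congr hDB' rfl rfl

/-- **Defining set of a repeated-root cyclic product code (Burton–Weldon).**
Let `A` be the repeated-root cyclic code of length `n_a = p^s n'_a` with monic
generator `g_a` (defining set relative to `α` of order `n'_a`: the multiplicities of
the roots `α^i` of `g_a`), and `B` the simple-root cyclic code of length `n_b` with
monic generator `g_b` and defining set `D_B` relative to `β` of order `n_b`, with
`gcd(n_a, n_b) = 1`.  Let `g_C` be the monic generator polynomial of the serialized
product code `C = A ⊗ B` of length `p^s n'_a n_b`.  Then, relative to `γ = αβ`
(of order `n'_a n_b`), the defining set of `C` is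
`(D_A ∪ D_A^{[n'_a]} ∪ … ∪ D_A^{[(n_b-1)n'_a]}) ∪_max (D̄_B ∪ D̄_B^{[n_b]} ∪ … ∪ D̄_B^{[(n'_a-1)n_b]})`
with `D̄_B = {i^⟨p^s⟩ : i ∈ D_B}`; equivalently, for every `0 ≤ i < n'_a n_b` the
multiplicity of `γ^i` as a root of `g_C` equals
`max( mult of α^{i mod n'_a} in g_a , p^s if (i mod n_b) ∈ D_B else 0 )`. -/
theorem definingSet_of_repeatedRoot_cyclic_product_code
    {F K : Type*} [Field F] [Fintype F] [DecidableEq F] [Field K] [Algebra F K]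
    (p t s n'a nb : ℕ) (hp : p.Prime) (hq : Fintype.card F = p ^ t) (ht : 0 < t)
    (hn'a : Nat.Coprime n'a p) (hnbp : Nat.Coprime nb p)
    (hcop : Nat.Coprime (p ^ s * n'a) nb)
    (hna : 0 < p ^ s * n'a) (hnb : 0 < nb)
    (α β : Kˣ) (hα : orderOf α = n'a) (hβ : orderOf β = nb)
    (ga gb : F[X]) (hga_monic : ga.Monic) (hga_dvd : ga ∣ X ^ (p ^ s * n'a) - 1)
    (hgb_monic : gb.Monic) (hgb_dvd : gb ∣ X ^ nb - 1)
    (DB : Finset ℕ)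
    (hDB : ∀ i : ℕ, i ∈ DB ↔ i < nb ∧ aeval ((β ^ i : Kˣ) : K) gb = 0)
    (gC : F[X]) (hgC_monic : gC.Monic)
    (hgC_dvd : gC ∣ X ^ (p ^ s * n'a * nb) - 1)
    (hgen : ∀ c : F[X], c.degree < ((p ^ s * n'a * nb : ℕ) : WithBot ℕ) →
      ((∃ M : Fin (p ^ s * n'a) → Fin nb → F,
          (∀ j : Fin nb, ga ∣ ∑ i : Fin (p ^ s * n'a), C (M i j) * X ^ (i : ℕ)) ∧
          (∀ i : Fin (p ^ s * n'a), gb ∣ ∑ j : Fin nb, C (M i j) * X ^ (j : ℕ)) ∧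
          ∀ ℓ : Fin (p ^ s * n'a * nb),
            c.coeff ℓ = M ⟨(ℓ : ℕ) % (p ^ s * n'a), Nat.mod_lt _ hna⟩
              ⟨(ℓ : ℕ) % nb, Nat.mod_lt _ hnb⟩) ↔ gC ∣ c)) :
    ∀ i < n'a * nb,
      rootMultiplicity (((α * β) ^ i : Kˣ) : K) (gC.map (algebraMap F K)) =
        max (rootMultiplicity ((α ^ (i % n'a) : Kˣ) : K) (ga.map (algebraMap F K)))
          (if i % nb ∈ DB then p ^ s else 0) :=
  definingSet_of_repeatedRoot_cyclic_product_code_general p t s n'a nb hp hq hn'a hnbp hcop hna hnb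
    α β hα hβ ga gb hga_monic hga_dvd hgb_monic hgb_dvd DB hDB gC hgC_monic hgC_dvd hgen
end

section
/- Let q be a power of the prime p, let γ be an element of order n' in an extension field K of F_q with gcd(n', p) = 1, let s ≥ 0 and let f, m be integers. Let c(X) = Σ_u c_u X^u ∈ F_q[X] have support Y = { u : c_u ≠ 0 }. Then, in the formal power series ring K[[X]], Σ_{i=0}^∞ c^{[p^s−1]}(γ^{f+im}) X^i = Σ_{u ∈ Y} binom(u, p^s−1) c_u γ^{(u−p^s+1)f} · (1 − γ^{(u−p^s+1)m} X)^{−1}. -/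
open Polynomial

/-!
Expanding the Hasse derivative gives `c^{[k]}(x) = Σ_u binom(u, k) c_u x^(u-k)`. At
`x = γ^(f+im)` the `u`-th summand is `binom(u, k) c_u γ^((u-k)f)` times the geometric sequence
`(γ^((u-k)m))^i`, whose generating function is `(1 - γ^((u-k)m) X)⁻¹`. Summands with `u < k`
vanish since `binom(u, k) = 0`, which is what lets the natural exponent `u - k` be replaced by the
integer `u - p^s + 1`.
-/

theorem PowerSeries.inv_one_sub_C_mul_X {K : Type*} [Field K] (b : K) :
    (1 - C b * X)⁻¹ = mk (b ^ ·) := by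
  rw [inv_eq_iff_mul_eq_one (by simp)]
  simpa [rescale_X, rescale_mk] using congrArg (rescale b) (mk_one_mul_one_sub_eq_one K)

theorem Polynomial.aeval_hasseDeriv {R S : Type*} [CommSemiring R] [CommSemiring S] [Algebra R S]
    (k : ℕ) (c : R[X]) (x : S) :
    aeval x (hasseDeriv k c) =
      ∑ u ∈ c.support, (u.choose k : S) * algebraMap R S (c.coeff u) * x ^ (u - k) := by
  simp [hasseDeriv_apply, sum_def, aeval_monomial, mul_assoc]

theorem Units.natCast_choose_mul_pow_sub_eq_zpow {R : Type*} [Semiring R] (γ : Rˣ) (u k : ℕ) :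
    (u.choose k : R) * (γ : R) ^ (u - k) = (u.choose k : R) * ((γ ^ ((u : ℤ) - k) : Rˣ) : R) := by
  rcases le_or_gt k u with hku | hku
  · rw [← Nat.cast_sub hku, zpow_natCast, Units.val_pow_eq_pow_val]
  · simp [Nat.choose_eq_zero_of_lt hku]

theorem powerSeries_hasseDeriv_eval_eq_sum_geometric_general
    {F K : Type*} [Field F] [Field K] [Algebra F K]
    (p s : ℕ) (hp : p.Prime)
    (γ : Kˣ)
    (f m : ℤ) (c : F[X]) :
    (PowerSeries.mk fun i : ℕ =>
        aeval ((γ ^ (f + (i : ℤ) * m) : Kˣ) : K) (hasseDeriv (p ^ s - 1) c)) =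
      ∑ u ∈ c.support,
        PowerSeries.C ((u.choose (p ^ s - 1) : K) * algebraMap F K (c.coeff u) *
            ((γ ^ (((u : ℤ) - (p ^ s : ℕ) + 1) * f) : Kˣ) : K)) *
          (1 - PowerSeries.C ((γ ^ (((u : ℤ) - (p ^ s : ℕ) + 1) * m) : Kˣ) : K) *
            PowerSeries.X)⁻¹ := by
  have hshift (u : ℕ) : (u : ℤ) - (p ^ s : ℕ) + 1 = (u : ℤ) - (p ^ s - 1 : ℕ) := by
    rw [Nat.cast_sub (Nat.one_le_pow _ _ hp.pos)]
    ring
  simp_rw [PowerSeries.inv_one_sub_C_mul_X, hshift]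
  ext n
  simp only [PowerSeries.coeff_mk, map_sum, PowerSeries.coeff_C_mul, aeval_hasseDeriv]
  refine Finset.sum_congr rfl fun u _ => ?_
  have hsplit (d : ℤ) : (γ ^ (f + n * m)) ^ d = γ ^ (d * f) * (γ ^ (d * m)) ^ n := by
    rw [← zpow_mul, ← zpow_natCast, ← zpow_mul, ← zpow_add]
    ring_nf
  rw [mul_right_comm, Units.natCast_choose_mul_pow_sub_eq_zpow, hsplit, Units.val_mul,
    Units.val_pow_eq_pow_val]
  ring

/-- **Power-series identity underlying the BCH-like bound.**  For a polynomial
`c = Σ_u c_u X^u` over `F_q` with support `Y`, and `γ` of order `n'` in an extension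
field `K` (`gcd(n', p) = 1`), one has in `K⟦X⟧`:
`Σ_{i≥0} c^{[p^s-1]}(γ^{f+im}) X^i
  = Σ_{u ∈ Y} binom(u, p^s-1) c_u γ^{(u-p^s+1)f} (1 - γ^{(u-p^s+1)m} X)⁻¹`. -/
theorem powerSeries_hasseDeriv_eval_eq_sum_geometric
    {F K : Type*} [Field F] [Fintype F] [Field K] [Algebra F K]
    (p t s n' : ℕ) (hp : p.Prime) (hq : Fintype.card F = p ^ t) (ht : 0 < t)
    (hn'p : Nat.Coprime n' p)
    (γ : Kˣ) (hγ : orderOf γ = n')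
    (f m : ℤ) (c : F[X]) :
    (PowerSeries.mk fun i : ℕ =>
        aeval ((γ ^ (f + (i : ℤ) * m) : Kˣ) : K) (hasseDeriv (p ^ s - 1) c)) =
      ∑ u ∈ c.support,
        PowerSeries.C ((u.choose (p ^ s - 1) : K) * algebraMap F K (c.coeff u) *
            ((γ ^ (((u : ℤ) - (p ^ s : ℕ) + 1) * f) : Kˣ) : K)) *
          (1 - PowerSeries.C ((γ ^ (((u : ℤ) - (p ^ s : ℕ) + 1) * m) : Kˣ) : K) *
            PowerSeries.X)⁻¹ :=
  powerSeries_hasseDeriv_eval_eq_sum_geometric_general p s hp γ f m c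
end
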